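/- arXiv:2212.14522 — 5 statements merged into one kernel-verified Lean document; each statement's English description precedes it below -/
import Mathlib

section
/- The cyclic descent set is cyclic shuffle-compatible: if π, σ are disjoint permutations, π′, σ′ are disjoint permutations, |π| = |π′|, |σ| = |σ′|, cDes[π] = cDes[π′], and cDes[σ] = cDes[σ′], then the multiset {{cDes[τ] : [τ] ∈ [π] ⧢ [σ]}}, where [τ] ranges over the set of cyclic shuffles of [π] and [σ] (each cyclic shuffle counted once), equals the multiset {{cDes[τ] : [τ] ∈ [π′] ⧢ [σ′]}}. -/
/-- A permutation: a list of distinct positive integers. -/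
def IsPerm (π : List ℕ) : Prop := π.Nodup ∧ ∀ x ∈ π, 0 < x

/-- The descent set `Des π = {i ∈ {1,…,n−1} : π_i > π_{i+1}}` (1-based indexing). -/
def Des (π : List ℕ) : Finset ℕ :=
  (Finset.Icc 1 (π.length - 1)).filter fun i => π.getD i 0 < π.getD (i - 1) 0

/-- The descent number. -/
def des (π : List ℕ) : ℕ := (Des π).card

/-- The major index. -/
def maj (π : List ℕ) : ℕ := ∑ i ∈ Des π, i

/-- The cyclic descent set `cDes π = {i ∈ {1,…,n} : π_i > π_{i+1}}`, indices mod `n`. -/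
def cDes (π : List ℕ) : Finset ℕ :=
  (Finset.Icc 1 π.length).filter fun i => π.getD (i % π.length) 0 < π.getD (i - 1) 0

/-- The cyclic descent number. -/
def cdes (π : List ℕ) : ℕ := (cDes π).card

/-- The cyclic major index. -/
def cmaj (π : List ℕ) : ℕ := ∑ i ∈ cDes π, i

/-- The peak set `Pk π = {i ∈ {2,…,n−1} : π_{i−1} < π_i > π_{i+1}}` (1-based indexing). -/
def Pk (π : List ℕ) : Finset ℕ :=
  (Finset.Icc 2 (π.length - 1)).filter fun i =>
    π.getD (i - 2) 0 < π.getD (i - 1) 0 ∧ π.getD i 0 < π.getD (i - 1) 0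

/-- The peak number. -/
def pk (π : List ℕ) : ℕ := (Pk π).card

/-- The cyclic peak set `cPk π = {i ∈ {1,…,n} : π_{i−1} < π_i > π_{i+1}}`, indices mod `n`. -/
def cPk (π : List ℕ) : Finset ℕ :=
  (Finset.Icc 1 π.length).filter fun i =>
    π.getD ((i + π.length - 2) % π.length) 0 < π.getD (i - 1) 0 ∧
      π.getD (i % π.length) 0 < π.getD (i - 1) 0

/-- The cyclic peak number. -/
def cpk (π : List ℕ) : ℕ := (cPk π).card

/-- The cyclic valley set `cVal π = {i ∈ {1,…,n} : π_{i−1} > π_i < π_{i+1}}`, indices mod `n`. -/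
def cVal (π : List ℕ) : Finset ℕ :=
  (Finset.Icc 1 π.length).filter fun i =>
    π.getD (i - 1) 0 < π.getD ((i + π.length - 2) % π.length) 0 ∧
      π.getD (i - 1) 0 < π.getD (i % π.length) 0

/-- The cyclic valley number. -/
def cval (π : List ℕ) : ℕ := (cVal π).card

/-- The distribution of a linear statistic `st` over the `n` rotations of `π`,
i.e. the multiset-valued cyclic statistic induced by `st`, evaluated at `[π]`. -/
def cycStat {A : Type*} (st : List ℕ → A) (π : List ℕ) : Multiset A :=
  (Multiset.range π.length).map fun i => st (π.rotate i)

/-- `τ` is a (linear) shuffle of `π` and `σ`. -/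
def IsShuffle (π σ τ : List ℕ) : Prop :=
  π.Sublist τ ∧ σ.Sublist τ ∧ τ.length = π.length + σ.length

/-- `[τ]` is a cyclic shuffle of `[π]` and `[σ]`: some rotation of `τ` is a shuffle
of some rotation of `π` and some rotation of `σ`. -/
def IsCyclicShuffle (π σ τ : List ℕ) : Prop :=
  ∃ i j k, IsShuffle (π.rotate i) (σ.rotate j) (τ.rotate k)

/-- The set of cyclic shuffles of `[π]` and `[σ]` (as elements of `Cycle ℕ`, so that each
cyclic shuffle is counted once) on which the statistic `cst` takes the value `v`. -/
def cycShuffleFiber {A : Type*} (cst : List ℕ → A) (π σ : List ℕ) (v : A) : Set (Cycle ℕ) :=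
  {c : Cycle ℕ | ∃ τ : List ℕ, (↑τ : Cycle ℕ) = c ∧ IsCyclicShuffle π σ τ ∧ cst τ = v}

/-- A (rotation-invariant) statistic `cst` is cyclic shuffle-compatible if the distribution
of `cst` over the set of cyclic shuffles of `[π]` and `[σ]` (each cyclic shuffle counted
once) depends only on `cst π`, `cst σ`, `|π|` and `|σ|`. -/
def CyclicShuffleCompatible {A : Type*} (cst : List ℕ → A) : Prop :=
  ∀ π σ π' σ' : List ℕ, IsPerm π → IsPerm σ → IsPerm π' → IsPerm σ' →
    π.Disjoint σ → π'.Disjoint σ' →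
    π.length = π'.length → σ.length = σ'.length →
    cst π = cst π' → cst σ = cst σ' →
    ∀ v : A, (cycShuffleFiber cst π σ v).ncard = (cycShuffleFiber cst π' σ' v).ncard

/-!
When `Des τ ⊆ T`, the first block of positions cut out by `T` is increasing in `τ`, so it is the
sorted merge of an initial segment of each factor; which segments are admissible depends only on
the descent sets of the factors. Recursing on the remaining blocks and inverting over subsets of
`T` shows that `Des` is shuffle compatible.

Every cyclic shuffle of `[π]` and `[σ]` has exactly `|π| + |σ|` linear representatives, all among
the shuffles of a rotation of `π` with a rotation of `σ`, a family closed under rotation. Summing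
the linear result over all pairs of rotations, `Des` has the same distribution on this family for
`(π, σ)` and `(π', σ')`. Since `Des = cDes \ {|τ|}` and rotating `τ` rotates the positions in
`cDes τ`, on a rotation-closed family the distribution of `Des` determines that of `cDes`, and
`cDes[τ]` is a function of `cDes τ`.
-/

lemma Multiset.eq_of_forall_countP_subset_eq {α : Type*} [DecidableEq α]
    {M N : Multiset (Finset α)} (h : ∀ T, M.countP (· ⊆ T) = N.countP (· ⊆ T)) : M = N := by
  have hsum (K : Multiset (Finset α)) (T : Finset α) :
      K.countP (· ⊆ T) = K.count T + ∑ R ∈ T.ssubsets, K.count R := by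
    rw [Multiset.countP_eq_card_filter, Finset.ssubsets, Finset.add_sum_erase _ (K.count ·)
      (Finset.mem_powerset_self T), ← Multiset.sum_count_eq_card (s := T.powerset)
      (by simp)]
    refine Finset.sum_congr rfl fun R hR => ?_
    rw [Multiset.count_filter, if_pos (Finset.mem_powerset.1 hR)]
  ext T
  induction T using Finset.strongInduction with
  | H T ih =>
  have := h T
  rw [hsum, hsum, Finset.sum_congr rfl fun R hR => ih R (Finset.mem_ssubsets.1 hR)] at this
  omega

lemma Multiset.map_prodMap_product {α β γ δ : Type*} (f : α → γ) (g : β → δ)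
    (s : Multiset α) (t : Multiset β) :
    (s ×ˢ t).map (Prod.map f g) = s.map f ×ˢ t.map g := by
  simp [SProd.sprod, Multiset.product, Multiset.map_bind, Multiset.bind_map, Multiset.map_map]

lemma Multiset.map_eq_map_of_factorsThrough {ι κ μ : Type*} {p : ι → Prop} {f : ι → μ}
    {g : ι → κ} (hf : ∀ x y, p x → p y → g x = g y → f x = f y) :
    ∀ {s t : Multiset ι}, (∀ x ∈ s, p x) → (∀ y ∈ t, p y) → s.map g = t.map g →
      s.map f = t.map f := by
  classical
  intro s
  induction s using Multiset.induction_on with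
  | empty => intro t _ _ h; simp_all [eq_comm]
  | cons a s ih =>
    intro t hs ht h
    obtain ⟨b, hb, hab⟩ := Multiset.mem_map.1 (h ▸ Multiset.mem_map_of_mem g
      (Multiset.mem_cons_self a s))
    rw [← Multiset.cons_erase hb, Multiset.map_cons, Multiset.map_cons, hab,
      Multiset.cons_inj_right] at h
    rw [← Multiset.cons_erase hb, Multiset.map_cons, Multiset.map_cons,
      hf a b (hs a (Multiset.mem_cons_self a s)) (ht b hb) hab.symm,
      ih (fun x hx => hs x (Multiset.mem_cons_of_mem hx))
        (fun y hy => ht y (Multiset.mem_of_mem_erase hy)) h]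

lemma count_map_erase (M : Multiset (Finset ℕ)) {L : ℕ} {T : Finset ℕ} (hT : L ∉ T) :
    (M.map (·.erase L)).count T = M.count T + M.count (insert L T) := by
  induction M using Multiset.induction_on with
  | empty => simp
  | cons a M ih =>
    have hne : T ≠ insert L T := fun h => hT (h ▸ Finset.mem_insert_self L T)
    have hiff : T = a.erase L ↔ T = a ∨ insert L T = a := by
      constructor
      · intro h
        by_cases ha : L ∈ a
        · exact .inr (h ▸ Finset.insert_erase ha)
        · exact .inl (h.trans (Finset.erase_eq_of_notMem ha))
      · rintro (rfl | rfl)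
        exacts [(Finset.erase_eq_of_notMem hT).symm, (Finset.erase_insert hT).symm]
    simp only [Multiset.map_cons, Multiset.count_cons, ih, hiff]
    by_cases h₁ : T = a <;> by_cases h₂ : insert L T = a
    · exact absurd (h₁.trans h₂.symm) hne
    · rw [if_pos (Or.inl h₁), if_pos h₁, if_neg h₂]; omega
    · rw [if_pos (Or.inr h₂), if_neg h₁, if_pos h₂]; omega
    · rw [if_neg (not_or.2 ⟨h₁, h₂⟩), if_neg h₁, if_neg h₂]; omega

lemma mem_Des {l : List ℕ} {i : ℕ} :
    i ∈ Des l ↔ 1 ≤ i ∧ i < l.length ∧ l.getD i 0 < l.getD (i - 1) 0 := by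
  simp only [Des, Finset.mem_filter, Finset.mem_Icc]
  omega

lemma mem_Des_iff_getElem {l : List ℕ} {i : ℕ} (h1 : 1 ≤ i) (h2 : i < l.length) :
    i ∈ Des l ↔ l[i] < l[i - 1] := by
  rw [mem_Des, List.getD_eq_getElem _ _ h2, List.getD_eq_getElem _ _ (by omega)]
  omega

lemma Des_eq_empty_iff {l : List ℕ} : Des l = ∅ ↔ l.Pairwise (· ≤ ·) := by
  rw [← List.isChain_iff_pairwise, List.isChain_iff_getElem, Finset.eq_empty_iff_forall_notMem]
  refine ⟨fun h i hi => ?_, fun h i hi => ?_⟩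
  · simpa [mem_Des_iff_getElem (show 1 ≤ i + 1 by omega) hi] using h (i + 1)
  · obtain ⟨h1, h2, -⟩ := mem_Des.1 hi
    rw [mem_Des_iff_getElem h1 h2] at hi
    have := h (i - 1) (by omega)
    simp only [Nat.sub_add_cancel h1] at this
    omega

lemma mem_Des_append_left {u v : List ℕ} {i : ℕ} (h : i < u.length) :
    i ∈ Des (u ++ v) ↔ i ∈ Des u := by
  rcases Nat.eq_zero_or_pos i with rfl | h1
  · simp [mem_Des]
  · rw [mem_Des_iff_getElem h1 (by simp; omega), mem_Des_iff_getElem h1 h,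
      List.getElem_append_left h, List.getElem_append_left (by omega)]

lemma mem_Des_append_right {u v : List ℕ} {j : ℕ} (h1 : 1 ≤ j) :
    j + u.length ∈ Des (u ++ v) ↔ j ∈ Des v := by
  by_cases h2 : j < v.length
  · rw [mem_Des_iff_getElem (by omega) (by simp; omega), mem_Des_iff_getElem h1 h2,
      List.getElem_append_right (by omega), List.getElem_append_right (by omega)]
    simp only [Nat.add_sub_cancel, show j + u.length - 1 - u.length = j - 1 by omega]
  · simp only [mem_Des, List.length_append]
    omega

lemma Des_take (l : List ℕ) (d : ℕ) : Des (l.take d) = (Des l).filter (· < d) := by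
  ext i
  rw [Finset.mem_filter]
  by_cases hi : i < d ∧ i < l.length
  · have key := mem_Des_append_left (u := l.take d) (v := l.drop d) (i := i) (by simp; omega)
    rw [List.take_append_drop] at key
    simp [← key, hi.1]
  · simp only [mem_Des, List.length_take]
    omega

def dropPos (d : ℕ) (X : Finset ℕ) : Finset ℕ := (X.filter (d < ·)).image (· - d)

lemma mem_dropPos {d j : ℕ} {X : Finset ℕ} : j ∈ dropPos d X ↔ 0 < j ∧ j + d ∈ X := by
  simp only [dropPos, Finset.mem_image, Finset.mem_filter]
  constructor
  · rintro ⟨i, ⟨hi, hdi⟩, rfl⟩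
    exact ⟨by omega, by rwa [Nat.sub_add_cancel hdi.le]⟩
  · rintro ⟨hj, hjX⟩
    exact ⟨j + d, ⟨hjX, by omega⟩, by omega⟩

lemma Des_drop (l : List ℕ) (d : ℕ) : Des (l.drop d) = dropPos d (Des l) := by
  ext j
  rw [mem_dropPos]
  by_cases hd : d ≤ l.length
  · have key (h1 : 1 ≤ j) := mem_Des_append_right (u := l.take d) (v := l.drop d) h1
    simp only [List.take_append_drop, List.length_take_of_le hd] at key
    exact ⟨fun hj => ⟨(mem_Des.1 hj).1, (key (mem_Des.1 hj).1).2 hj⟩,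
      fun ⟨h1, hj⟩ => (key h1).1 hj⟩
  · simp only [mem_Des, List.length_drop]
    omega

lemma Des_subset_iff_take_drop {l : List ℕ} {T : Finset ℕ} {t : ℕ}
    (hbelow : ∀ i ∈ T, 1 ≤ i → t ≤ i) (hcut : t < l.length → t ∈ T) :
    Des l ⊆ T ↔ Des (l.take t) = ∅ ∧ Des (l.drop t) ⊆ dropPos t T := by
  rw [Des_take, Des_drop, Finset.filter_eq_empty_iff]
  constructor
  · intro h
    refine ⟨fun i hi hit => ?_, fun j hj => ?_⟩
    · have := hbelow i (h hi) (mem_Des.1 hi).1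
      omega
    · obtain ⟨hj0, hjD⟩ := mem_dropPos.1 hj
      exact mem_dropPos.2 ⟨hj0, h hjD⟩
  · rintro ⟨hlow, hhigh⟩ i hi
    obtain ⟨h1, h2, -⟩ := mem_Des.1 hi
    rcases lt_trichotomy i t with hit | rfl | hti
    · exact absurd hit (hlow hi)
    · exact hcut h2
    · have hmem : i - t ∈ dropPos t (Des l) :=
        mem_dropPos.2 ⟨Nat.sub_pos_of_lt hti, by rwa [Nat.sub_add_cancel hti.le]⟩
      obtain ⟨-, hT⟩ := mem_dropPos.1 (hhigh hmem)
      rwa [Nat.sub_add_cancel hti.le] at hT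

lemma Des_eq_cDes_erase (l : List ℕ) : Des l = (cDes l).erase l.length := by
  ext i
  simp only [Finset.mem_erase, mem_Des, cDes, Finset.mem_filter, Finset.mem_Icc]
  constructor
  · rintro ⟨h1, h2, h3⟩
    exact ⟨by omega, ⟨h1, h2.le⟩, by rwa [Nat.mod_eq_of_lt h2]⟩
  · rintro ⟨hne, ⟨h1, h2⟩, h3⟩
    rw [Nat.mod_eq_of_lt (by omega)] at h3
    exact ⟨h1, by omega, h3⟩

def shuffles (α β : List ℕ) : Finset (List ℕ) :=
  (α ++ β).permutations.toFinset.filter fun τ => α.Sublist τ ∧ β.Sublist τ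

lemma mem_shuffles {α β τ : List ℕ} :
    τ ∈ shuffles α β ↔ τ.Perm (α ++ β) ∧ α.Sublist τ ∧ β.Sublist τ := by
  simp [shuffles, List.mem_permutations]

lemma isShuffle_iff_mem_shuffles {α β τ : List ℕ} (hd : (α ++ β).Nodup) :
    IsShuffle α β τ ↔ τ ∈ shuffles α β := by
  rw [mem_shuffles, IsShuffle]
  constructor
  · rintro ⟨hα, hβ, hlen⟩
    have hsub : (α ++ β).Subperm τ := hd.subperm (List.append_subset.2 ⟨hα.subset, hβ.subset⟩)
    exact ⟨(hsub.perm_of_length_le (by simp [hlen])).symm, hα, hβ⟩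
  · rintro ⟨hp, hα, hβ⟩
    exact ⟨hα, hβ, by simpa using hp.length_eq⟩

lemma length_eq_of_mem_shuffles {α β τ : List ℕ} (h : τ ∈ shuffles α β) :
    τ.length = α.length + β.length := by
  simpa using (mem_shuffles.1 h).1.length_eq

lemma nodup_of_mem_shuffles {α β τ : List ℕ} (hd : (α ++ β).Nodup) (h : τ ∈ shuffles α β) :
    τ.Nodup :=
  (mem_shuffles.1 h).1.nodup_iff.2 hd

lemma append_mem_shuffles {α₁ β₁ α₂ β₂ u v : List ℕ} (hu : u ∈ shuffles α₁ β₁)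
    (hv : v ∈ shuffles α₂ β₂) : u ++ v ∈ shuffles (α₁ ++ α₂) (β₁ ++ β₂) := by
  rw [mem_shuffles] at hu hv ⊢
  refine ⟨(hu.1.append hv.1).trans ?_, hu.2.1.append hv.2.1, hu.2.2.append hv.2.2⟩
  simpa only [List.append_assoc] using (List.perm_append_comm_assoc β₁ α₂ β₂).append_left α₁

lemma countP_mem_of_mem_shuffles {α α₁ β₁ u : List ℕ} (hu : u ∈ shuffles α₁ β₁)
    (h₁ : α₁ ⊆ α) (h₂ : ∀ x ∈ β₁, x ∉ α) : u.countP (· ∈ α) = α₁.length := by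
  rw [(mem_shuffles.1 hu).1.countP_eq, List.countP_append,
    List.countP_eq_length.2 fun x hx => by simpa using h₁ hx,
    List.countP_eq_zero.2 (by simpa using h₂), Nat.add_zero]

lemma take_drop_mem_shuffles {α β τ : List ℕ} (hd : (α ++ β).Nodup) (hτ : τ ∈ shuffles α β)
    {t a : ℕ} (ht : t ≤ τ.length) (ha : (τ.take t).countP (· ∈ α) = a) :
    a ≤ α.length ∧ t - a ≤ β.length ∧ τ.take t ∈ shuffles (α.take a) (β.take (t - a)) ∧
      τ.drop t ∈ shuffles (α.drop a) (β.drop (t - a)) := by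
  obtain ⟨hp, hα, hβ⟩ := mem_shuffles.1 hτ
  rw [← List.take_append_drop t τ] at hα hβ hp
  obtain ⟨α₁, α₂, rfl, hα₁, hα₂⟩ := List.sublist_append_iff.1 hα
  obtain ⟨β₁, β₂, rfl, hβ₁, hβ₂⟩ := List.sublist_append_iff.1 hβ
  have hp' : (τ.take t ++ τ.drop t).Perm ((α₁ ++ β₁) ++ (α₂ ++ β₂)) :=
    hp.trans (by simpa only [List.append_assoc] using
      (List.perm_append_comm_assoc α₂ β₁ β₂).append_left α₁)
  have hnd := List.nodup_append.1 (hp'.nodup_iff.1 (hp.nodup_iff.2 hd))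
  have hs₁ := hnd.1.subperm (List.append_subset.2 ⟨hα₁.subset, hβ₁.subset⟩)
  have hs₂ := hnd.2.1.subperm (List.append_subset.2 ⟨hα₂.subset, hβ₂.subset⟩)
  have hlen := hp'.length_eq
  have l₁ := hs₁.length_le
  have l₂ := hs₂.length_le
  simp only [List.length_append] at hlen l₁ l₂
  have e₁ := (hs₁.perm_of_length_le (by simp only [List.length_append]; omega)).symm
  have e₂ := (hs₂.perm_of_length_le (by simp only [List.length_append]; omega)).symm
  have haα : a = α₁.length := by
    rw [← ha, countP_mem_of_mem_shuffles (mem_shuffles.2 ⟨e₁, hα₁, hβ₁⟩) (by simp)]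
    intro x hx hxα
    exact List.disjoint_of_nodup_append hd hxα (by simp [hx])
  have hlt : (τ.take t).length = t := List.length_take_of_le ht
  have htb : t - a = β₁.length := by
    have := e₁.length_eq
    simp only [List.length_append] at this
    omega
  subst haα
  rw [htb, List.take_left, List.take_left, List.drop_left, List.drop_left]
  exact ⟨by simp, by simp, mem_shuffles.2 ⟨e₁, hα₁, hβ₁⟩, mem_shuffles.2 ⟨e₂, hα₂, hβ₂⟩⟩

lemma eq_of_mem_shuffles_of_pairwise {α β u v : List ℕ} (hu : u ∈ shuffles α β)
    (hv : v ∈ shuffles α β) (hu' : u.Pairwise (· ≤ ·)) (hv' : v.Pairwise (· ≤ ·)) : u = v :=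
  List.Perm.eq_of_pairwise' hu' hv' ((mem_shuffles.1 hu).1.trans (mem_shuffles.1 hv).1.symm)

lemma insertionSort_mem_shuffles {α β : List ℕ} (hα : α.Pairwise (· ≤ ·))
    (hβ : β.Pairwise (· ≤ ·)) : (α ++ β).insertionSort (· ≤ ·) ∈ shuffles α β := by
  have hs := List.pairwise_insertionSort (· ≤ ·) (α ++ β)
  have hp := List.perm_insertionSort (· ≤ ·) (α ++ β)
  refine mem_shuffles.2 ⟨hp, List.sublist_of_subperm_of_pairwise ?_ hα hs,
    List.sublist_of_subperm_of_pairwise ?_ hβ hs⟩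
  · exact (List.sublist_append_left α β).subperm.trans hp.symm.subperm
  · exact (List.sublist_append_right α β).subperm.trans hp.symm.subperm

lemma filter_eq_of_mem_shuffles {α β τ : List ℕ} (p : ℕ → Bool) (hτ : τ ∈ shuffles α β)
    (hα : ∀ x ∈ α, p x) (hβ : ∀ x ∈ β, ¬ p x) : τ.filter p = α := by
  obtain ⟨hp, hsα, -⟩ := mem_shuffles.1 hτ
  have hαp : α.filter p = α := List.filter_eq_self.2 hα
  refine ((hαp ▸ hsα.filter p).eq_of_length ?_).symm
  rw [(hp.filter p).length_eq, List.filter_append, hαp, List.filter_eq_nil_iff.2 hβ,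
    List.append_nil]

lemma exists_block_end (T : Finset ℕ) {L : ℕ} (hL : 0 < L) :
    ∃ t, 1 ≤ t ∧ t ≤ L ∧ (∀ i ∈ T, 1 ≤ i → t ≤ i) ∧ (t < L → t ∈ T) := by
  classical
  have hP : ∃ t, 1 ≤ t ∧ (t ∈ T ∨ L ≤ t) := ⟨L, hL, .inr le_rfl⟩
  refine ⟨Nat.find hP, (Nat.find_spec hP).1, Nat.find_min' hP ⟨hL, .inr le_rfl⟩,
    fun i hi h1 => Nat.find_min' hP ⟨h1, .inl hi⟩, fun h => ?_⟩
  exact (Nat.find_spec hP).2.resolve_right (by omega)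

section BlockRecursion

variable {α β : List ℕ} {T : Finset ℕ} {t : ℕ}

/-- Given `Des τ ⊆ T`, the first block `τ.take t` is increasing, so it is the sorted merge of
its letters: it is determined by the number `a` of them that come from `α`. -/
lemma card_filter_Des_subset_countP_eq (hd : (α ++ β).Nodup) (ht : t ≤ α.length + β.length)
    (hbelow : ∀ i ∈ T, 1 ≤ i → t ≤ i) (hcut : t < α.length + β.length → t ∈ T) {a : ℕ}
    (hat : a ≤ t) (haα : a ≤ α.length) (haβ : t - a ≤ β.length) (hDα : Des (α.take a) = ∅)
    (hDβ : Des (β.take (t - a)) = ∅) :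
    (((shuffles α β).filter (Des · ⊆ T)).filter fun τ => (τ.take t).countP (· ∈ α) = a).card =
      ((shuffles (α.drop a) (β.drop (t - a))).filter (Des · ⊆ dropPos t T)).card := by
  have hsplit {τ : List ℕ} (hτ : τ ∈ shuffles α β) :=
    Des_subset_iff_take_drop (l := τ) hbelow (by rw [length_eq_of_mem_shuffles hτ]; exact hcut)
  have hlen {τ : List ℕ} (hτ : τ ∈ shuffles α β) : t ≤ τ.length :=
    length_eq_of_mem_shuffles hτ ▸ ht
  set u := (α.take a ++ β.take (t - a)).insertionSort (· ≤ ·)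
  have hu : u ∈ shuffles (α.take a) (β.take (t - a)) :=
    insertionSort_mem_shuffles (Des_eq_empty_iff.1 hDα) (Des_eq_empty_iff.1 hDβ)
  have hu_sorted : u.Pairwise (· ≤ ·) := List.pairwise_insertionSort _ _
  have hu_len : u.length = t := by
    simp only [length_eq_of_mem_shuffles hu, List.length_take]
    omega
  refine Finset.card_bij' (fun τ _ => τ.drop t) (fun ρ _ => u ++ ρ) ?_ ?_ ?_ ?_
  · intro τ hτ
    obtain ⟨hτS, rfl⟩ := Finset.mem_filter.1 hτ
    obtain ⟨hτsh, hDes⟩ := Finset.mem_filter.1 hτS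
    exact Finset.mem_filter.2 ⟨(take_drop_mem_shuffles hd hτsh (hlen hτsh) rfl).2.2.2,
      ((hsplit hτsh).1 hDes).2⟩
  · intro ρ hρ
    obtain ⟨hρ, hDes⟩ := Finset.mem_filter.1 hρ
    have huρ : u ++ ρ ∈ shuffles α β := by
      simpa only [List.take_append_drop] using append_mem_shuffles hu hρ
    have htake : (u ++ ρ).take t = u := List.take_left' hu_len
    refine Finset.mem_filter.2 ⟨Finset.mem_filter.2 ⟨huρ, (hsplit huρ).2 ?_⟩, ?_⟩
    · rw [htake, List.drop_left' hu_len]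
      exact ⟨Des_eq_empty_iff.2 hu_sorted, hDes⟩
    · rw [htake, countP_mem_of_mem_shuffles hu (List.take_subset _ _)
        fun x hx hxα => List.disjoint_of_nodup_append hd hxα (List.mem_of_mem_take hx),
        List.length_take_of_le haα]
  · intro τ hτ
    obtain ⟨hτS, rfl⟩ := Finset.mem_filter.1 hτ
    obtain ⟨hτsh, hDes⟩ := Finset.mem_filter.1 hτS
    rw [eq_of_mem_shuffles_of_pairwise hu (take_drop_mem_shuffles hd hτsh (hlen hτsh) rfl).2.2.1
      hu_sorted (Des_eq_empty_iff.1 ((hsplit hτsh).1 hDes).1), List.take_append_drop]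
  · intro ρ _
    exact List.drop_left' hu_len

lemma card_filter_Des_subset_eq_sum (hd : (α ++ β).Nodup) (ht : t ≤ α.length + β.length)
    (hbelow : ∀ i ∈ T, 1 ≤ i → t ≤ i) (hcut : t < α.length + β.length → t ∈ T) :
    ((shuffles α β).filter (Des · ⊆ T)).card =
      ∑ a ∈ (Finset.range (t + 1)).filter (fun a => a ≤ α.length ∧ t - a ≤ β.length ∧
          Des (α.take a) = ∅ ∧ Des (β.take (t - a)) = ∅),
        ((shuffles (α.drop a) (β.drop (t - a))).filter (Des · ⊆ dropPos t T)).card := by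
  rw [Finset.card_eq_sum_card_fiberwise (f := fun τ => (τ.take t).countP (· ∈ α))]
  · refine Finset.sum_congr rfl fun a ha => ?_
    simp only [Finset.mem_filter, Finset.mem_range] at ha
    exact card_filter_Des_subset_countP_eq hd ht hbelow hcut (by omega) ha.2.1 ha.2.2.1
      ha.2.2.2.1 ha.2.2.2.2
  · intro τ hτ
    obtain ⟨hτsh, hDes⟩ := Finset.mem_filter.1 hτ
    have hlen := length_eq_of_mem_shuffles hτsh
    obtain ⟨hα, hβ, htake, -⟩ := take_drop_mem_shuffles hd hτsh (hlen ▸ ht) rfl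
    have hsorted := Des_eq_empty_iff.1
      ((Des_subset_iff_take_drop hbelow (hlen ▸ hcut)).1 hDes).1
    have hle : (τ.take t).countP (· ∈ α) ≤ t :=
      List.countP_le_length.trans (List.length_take_le _ _)
    refine Finset.mem_filter.2 ⟨Finset.mem_range.2 (Nat.lt_succ_of_le hle), hα, hβ, ?_, ?_⟩ <;>
      refine Des_eq_empty_iff.2 (hsorted.sublist ?_)
    exacts [(mem_shuffles.1 htake).2.1, (mem_shuffles.1 htake).2.2]

end BlockRecursion

theorem card_filter_Des_subset_congr {α β α' β' : List ℕ} (hd : (α ++ β).Nodup)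
    (hd' : (α' ++ β').Nodup) (hα : α.length = α'.length) (hβ : β.length = β'.length)
    (hDα : Des α = Des α') (hDβ : Des β = Des β') (T : Finset ℕ) :
    ((shuffles α β).filter (Des · ⊆ T)).card = ((shuffles α' β').filter (Des · ⊆ T)).card := by
  induction h : α.length + β.length using Nat.strong_induction_on
    generalizing α β α' β' T with
  | _ L ih =>
  rcases Nat.eq_zero_or_pos L with rfl | hL
  · obtain ⟨rfl, rfl⟩ : α = [] ∧ β = [] := by simpa using h
    obtain ⟨rfl, rfl⟩ : α' = [] ∧ β' = [] := by simp_all [eq_comm]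
    rfl
  obtain ⟨t, ht1, htL, hbelow, hcut⟩ := exists_block_end T hL
  rw [card_filter_Des_subset_eq_sum hd (h ▸ htL) hbelow (h ▸ hcut),
    card_filter_Des_subset_eq_sum hd' (by omega) hbelow (fun h' => hcut (by omega))]
  refine Finset.sum_congr (Finset.filter_congr fun a _ => by
    rw [Des_take, Des_take, Des_take, Des_take, hDα, hDβ, hα, hβ]) fun a ha => ?_
  simp only [Finset.mem_filter, Finset.mem_range] at ha
  have hdrop {x y : List ℕ} (hxy : (x ++ y).Nodup) (i j : ℕ) : (x.drop i ++ y.drop j).Nodup :=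
    hxy.sublist ((List.drop_sublist _ _).append (List.drop_sublist _ _))
  refine ih (L - t) (by omega) (hdrop hd _ _) (hdrop hd' _ _)
    (by simp [hα]) (by simp [hβ]) (by rw [Des_drop, Des_drop, hDα])
    (by rw [Des_drop, Des_drop, hDβ]) _ (by simp; omega)

theorem map_Des_shuffles_congr {α β α' β' : List ℕ} (hd : (α ++ β).Nodup)
    (hd' : (α' ++ β').Nodup) (hα : α.length = α'.length) (hβ : β.length = β'.length)
    (hDα : Des α = Des α') (hDβ : Des β = Des β') :
    (shuffles α β).val.map Des = (shuffles α' β').val.map Des :=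
  Multiset.eq_of_forall_countP_subset_eq fun T => by
    simpa only [Multiset.countP_map, ← Finset.filter_val, Finset.card_val] using
      card_filter_Des_subset_congr hd hd' hα hβ hDα hDβ T

def posCycle (L : ℕ) : Equiv.Perm ℕ := (List.range' 1 L).formPerm

lemma posCycle_pow_apply {L k : ℕ} (hk : k < L) (r : ℕ) :
    (posCycle L ^ r) (k + 1) = (k + r) % L + 1 := by
  have := List.formPerm_pow_apply_getElem _ (List.nodup_range' (s := 1) (n := L)) r k
    (by simpa using hk)
  simpa [posCycle, List.getElem_range', add_comm] using this

lemma posCycle_pow_apply_of_notMem {L i : ℕ} (hi : i ∉ Finset.Icc 1 L) (r : ℕ) :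
    (posCycle L ^ r) i = i :=
  Equiv.Perm.pow_apply_eq_self_of_apply_eq_self
    (List.formPerm_apply_of_notMem fun h => hi (by rw [List.mem_range'_1] at h; simp; omega)) r

def rotatePos (L r : ℕ) (S : Finset ℕ) : Finset ℕ :=
  S.map (posCycle L ^ r).symm.toEmbedding

lemma mem_rotatePos {L r i : ℕ} {S : Finset ℕ} : i ∈ rotatePos L r S ↔ (posCycle L ^ r) i ∈ S := by
  simp [rotatePos, Finset.mem_map_equiv]

lemma rotatePos_Icc (L r : ℕ) : rotatePos L r (Finset.Icc 1 L) = Finset.Icc 1 L := by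
  ext i
  rw [mem_rotatePos]
  by_cases hi : i ∈ Finset.Icc 1 L
  · obtain ⟨k, hk, rfl⟩ : ∃ k < L, i = k + 1 := ⟨i - 1, by simp at hi; omega, by simp at hi; omega⟩
    rw [posCycle_pow_apply hk]
    simp [Nat.mod_lt _ (show 0 < L by omega)]
    omega
  · rw [posCycle_pow_apply_of_notMem hi]

lemma notMem_rotatePos_of_notMem {L j : ℕ} {S : Finset ℕ} (hj : j ∈ Finset.Icc 1 L)
    (hjS : j ∉ S) : L ∉ rotatePos L j S := by
  obtain ⟨hj1, hjL⟩ := Finset.mem_Icc.1 hj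
  have hLj := posCycle_pow_apply (L := L) (k := L - 1) (by omega) j
  rw [Nat.sub_add_cancel (by omega), show L - 1 + j = L + (j - 1) by omega,
    Nat.add_mod_left, Nat.mod_eq_of_lt (by omega), Nat.sub_add_cancel hj1] at hLj
  rwa [mem_rotatePos, hLj]

lemma card_Icc_sdiff_rotatePos (L r : ℕ) (S : Finset ℕ) :
    (Finset.Icc 1 L \ rotatePos L r S).card = (Finset.Icc 1 L \ S).card := by
  conv_lhs => rw [← rotatePos_Icc L r]
  exact (congrArg Finset.card (Finset.map_sdiff _ _).symm).trans (Finset.card_map _)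

lemma cDes_subset_Icc (l : List ℕ) : cDes l ⊆ Finset.Icc 1 l.length :=
  Finset.filter_subset _ _

lemma getD_rotate {l : List ℕ} {r k : ℕ} (h : k < l.length) :
    (l.rotate r).getD k 0 = l.getD ((k + r) % l.length) 0 := by
  rw [List.getD_eq_getElem _ _ (by simpa using h),
    List.getD_eq_getElem _ _ (Nat.mod_lt _ (by omega)), List.getElem_rotate]

lemma cDes_rotate (l : List ℕ) (r : ℕ) : cDes (l.rotate r) = rotatePos l.length r (cDes l) := by
  ext i
  rw [mem_rotatePos]
  by_cases hi : i ∈ Finset.Icc 1 l.length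
  · obtain ⟨k, hk, rfl⟩ : ∃ k < l.length, i = k + 1 :=
      ⟨i - 1, by simp at hi; omega, by simp at hi; omega⟩
    have hL : 0 < l.length := by omega
    rw [posCycle_pow_apply hk]
    simp only [cDes, Finset.mem_filter, Finset.mem_Icc, List.length_rotate, Nat.add_sub_cancel,
      getD_rotate (Nat.mod_lt _ hL), getD_rotate hk, Nat.mod_add_mod, add_right_comm k 1 r]
    have := Nat.mod_lt (k + r) hL
    omega
  · rw [posCycle_pow_apply_of_notMem hi]
    have h := cDes_subset_Icc (l.rotate r)
    rw [List.length_rotate] at h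
    exact iff_of_false (fun h' => hi (h h')) fun h' => hi (cDes_subset_Icc l h')

lemma cDes_ne_Icc {l : List ℕ} (hl : l ≠ []) : cDes l ≠ Finset.Icc 1 l.length := by
  intro h
  have hL : 0 < l.length := List.length_pos_iff.2 hl
  obtain ⟨k, hk, hmin⟩ := Finset.exists_min_image (Finset.range l.length) (l.getD · 0)
    (Finset.nonempty_range_iff.2 hL.ne')
  rw [Finset.mem_range] at hk
  have hdes : k + 1 ∈ cDes l := h ▸ Finset.mem_Icc.2 ⟨by omega, by omega⟩
  simp only [cDes, Finset.mem_filter, Nat.add_sub_cancel] at hdes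
  exact (hmin _ (Finset.mem_range.2 (Nat.mod_lt _ hL))).not_gt hdes.2

lemma cyclicPermutations_eq_map_rotate {l : List ℕ} (hl : l ≠ []) :
    l.cyclicPermutations = (List.range l.length).map l.rotate :=
  List.ext_getElem (by simp [List.length_cyclicPermutations_of_ne_nil _ hl])
    fun n _ _ => by simp [List.getElem_cyclicPermutations]

lemma cycStat_eq_map_cyclicPermutations {A : Type*} (st : List ℕ → A) {l : List ℕ}
    (hl : l ≠ []) : cycStat st l = (l.cyclicPermutations.map st : Multiset A) := by
  simp [cycStat, cyclicPermutations_eq_map_rotate hl, Multiset.range, Function.comp_def]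

lemma cycStat_rotate {A : Type*} (st : List ℕ → A) (l : List ℕ) (k : ℕ) :
    cycStat st (l.rotate k) = cycStat st l := by
  rcases eq_or_ne l [] with rfl | hl
  · simp
  rw [cycStat_eq_map_cyclicPermutations st hl,
    cycStat_eq_map_cyclicPermutations st (by simpa using hl), Multiset.coe_eq_coe]
  exact ((List.IsRotated.cyclicPermutations ⟨k, rfl⟩).perm.map st).symm

def shufflesOfRotations (π σ : List ℕ) : Finset (List ℕ) :=
  (π.cyclicPermutations.toFinset ×ˢ σ.cyclicPermutations.toFinset).biUnion
    fun p => shuffles p.1 p.2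

lemma mem_shufflesOfRotations {π σ τ : List ℕ} :
    τ ∈ shufflesOfRotations π σ ↔ ∃ x y, x ~r π ∧ y ~r σ ∧ τ ∈ shuffles x y := by
  simp [shufflesOfRotations, List.mem_cyclicPermutations_iff]

lemma nodup_append_of_isRotated {π σ x y : List ℕ} (hd : (π ++ σ).Nodup) (hx : x ~r π)
    (hy : y ~r σ) : (x ++ y).Nodup :=
  (hx.perm.append hy.perm).nodup_iff.2 hd

lemma length_eq_of_mem_shufflesOfRotations {π σ τ : List ℕ} (h : τ ∈ shufflesOfRotations π σ) :
    τ.length = π.length + σ.length := by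
  obtain ⟨x, y, hx, hy, hτ⟩ := mem_shufflesOfRotations.1 h
  rw [length_eq_of_mem_shuffles hτ, hx.perm.length_eq, hy.perm.length_eq]

lemma nodup_of_mem_shufflesOfRotations {π σ τ : List ℕ} (hd : (π ++ σ).Nodup)
    (h : τ ∈ shufflesOfRotations π σ) : τ.Nodup := by
  obtain ⟨x, y, hx, hy, hτ⟩ := mem_shufflesOfRotations.1 h
  exact nodup_of_mem_shuffles (nodup_append_of_isRotated hd hx hy) hτ

/-- Moving the first `k` letters of a shuffle to the end moves the letters of `x` and `y`
among them to the ends of `x` and `y`. -/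
lemma rotate_mem_shufflesOfRotations {π σ τ : List ℕ} (hd : (π ++ σ).Nodup)
    (h : τ ∈ shufflesOfRotations π σ) (k : ℕ) : τ.rotate k ∈ shufflesOfRotations π σ := by
  obtain ⟨x, y, hx, hy, hτ⟩ := mem_shufflesOfRotations.1 h
  rcases eq_or_ne τ [] with rfl | hne
  · simpa using h
  set t := k % τ.length
  set a := (τ.take t).countP (· ∈ x)
  obtain ⟨ha, hb, htake, hdrop⟩ := take_drop_mem_shuffles (nodup_append_of_isRotated hd hx hy)
    hτ (Nat.mod_lt k (List.length_pos_iff.2 hne)).le (a := a) rfl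
  rw [List.rotate_eq_drop_append_take_mod]
  refine mem_shufflesOfRotations.2 ⟨x.rotate a, y.rotate (t - a),
    (List.IsRotated.symm ⟨a, rfl⟩).trans hx, (List.IsRotated.symm ⟨t - a, rfl⟩).trans hy, ?_⟩
  rw [List.rotate_eq_drop_append_take ha, List.rotate_eq_drop_append_take hb]
  exact append_mem_shuffles hdrop htake

lemma pairwiseDisjoint_shuffles {π σ : List ℕ} (hd : (π ++ σ).Nodup) :
    (↑(π.cyclicPermutations.toFinset ×ˢ σ.cyclicPermutations.toFinset) :
      Set (List ℕ × List ℕ)).PairwiseDisjoint fun p => shuffles p.1 p.2 := by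
  have hdisj := List.disjoint_of_nodup_append hd
  have hfilter {x y τ : List ℕ} (hx : x ~r π) (hy : y ~r σ) (hτ : τ ∈ shuffles x y) :
      τ.filter (· ∈ π) = x ∧ τ.filter (· ∈ σ) = y := by
    refine ⟨filter_eq_of_mem_shuffles _ hτ (by simp [hx.mem_iff])
      (by simpa [hy.mem_iff] using fun a ha haπ => hdisj haπ ha), ?_⟩
    have hτ' : τ ∈ shuffles y x := by
      rw [mem_shuffles] at hτ ⊢
      exact ⟨hτ.1.trans List.perm_append_comm, hτ.2.2, hτ.2.1⟩
    exact filter_eq_of_mem_shuffles _ hτ' (by simp [hy.mem_iff])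
      (by simpa [hx.mem_iff] using fun a ha haσ => hdisj ha haσ)
  rintro ⟨x, y⟩ hxy ⟨x', y'⟩ hxy' hne
  simp only [Finset.coe_product, Set.mem_prod, Finset.mem_coe, List.mem_toFinset,
    List.mem_cyclicPermutations_iff] at hxy hxy'
  refine Finset.disjoint_left.2 fun τ h h' => hne ?_
  obtain ⟨e₁, e₂⟩ := hfilter hxy.1 hxy.2 h
  obtain ⟨e₁', e₂'⟩ := hfilter hxy'.1 hxy'.2 h'
  rw [← e₁, ← e₂, ← e₁', ← e₂']

lemma map_Des_shufflesOfRotations {π σ : List ℕ} (hd : (π ++ σ).Nodup) :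
    (shufflesOfRotations π σ).val.map Des =
      ((π.cyclicPermutations ×ˢ σ.cyclicPermutations : Multiset (List ℕ × List ℕ)).map
        fun p => (shuffles p.1 p.2).val.map Des).join := by
  have hπ := (List.nodup_append.1 hd).1.cyclicPermutations
  have hσ := (List.nodup_append.1 hd).2.1.cyclicPermutations
  rw [shufflesOfRotations, ← Finset.disjiUnion_eq_biUnion _ _ (pairwiseDisjoint_shuffles hd),
    Finset.disjiUnion_val, Multiset.map_bind, Multiset.bind, Finset.product_val,
    List.toFinset_val, List.toFinset_val, hπ.dedup, hσ.dedup]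

lemma map_Des_cyclicPermutations_congr {l l' : List ℕ} (hl : l.length = l'.length)
    (h : cycStat cDes l = cycStat cDes l') :
    (l.cyclicPermutations : Multiset (List ℕ)).map Des =
      (l'.cyclicPermutations : Multiset (List ℕ)).map Des := by
  rcases eq_or_ne l [] with rfl | hne
  · rw [List.eq_nil_of_length_eq_zero hl.symm]
  have hne' : l' ≠ [] := by rintro rfl; simp_all
  have key {m : List ℕ} (hm : m ≠ []) : (m.cyclicPermutations : Multiset (List ℕ)).map Des =
      (cycStat cDes m).map (·.erase m.length) := by
    simp only [cycStat_eq_map_cyclicPermutations _ hm, Multiset.map_coe, List.map_map]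
    refine congrArg _ (List.map_congr_left fun x hx => ?_)
    rw [Function.comp_apply, Des_eq_cDes_erase,
      (List.mem_cyclicPermutations_iff.1 hx).perm.length_eq]
  rw [key hne, key hne', h, hl]

theorem map_Des_shufflesOfRotations_congr {π σ π' σ' : List ℕ} (hd : (π ++ σ).Nodup)
    (hd' : (π' ++ σ').Nodup) (hπ : π.length = π'.length) (hσ : σ.length = σ'.length)
    (hcπ : cycStat cDes π = cycStat cDes π') (hcσ : cycStat cDes σ = cycStat cDes σ') :
    (shufflesOfRotations π σ).val.map Des = (shufflesOfRotations π' σ').val.map Des := by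
  rw [map_Des_shufflesOfRotations hd, map_Des_shufflesOfRotations hd']
  refine congrArg _ (Multiset.map_eq_map_of_factorsThrough (g := Prod.map Des Des)
    (p := fun q => (q.1 ++ q.2).Nodup ∧ q.1.length = π.length ∧ q.2.length = σ.length)
    (fun q q' hq hq' hg => map_Des_shuffles_congr hq.1 hq'.1 (hq.2.1.trans hq'.2.1.symm)
      (hq.2.2.trans hq'.2.2.symm) (Prod.ext_iff.1 hg).1 (Prod.ext_iff.1 hg).2) ?_ ?_ ?_)
  · simp only [Multiset.mem_product, Multiset.mem_coe, List.mem_cyclicPermutations_iff]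
    exact fun q ⟨hx, hy⟩ => ⟨nodup_append_of_isRotated hd hx hy, hx.perm.length_eq,
      hy.perm.length_eq⟩
  · simp only [Multiset.mem_product, Multiset.mem_coe, List.mem_cyclicPermutations_iff]
    exact fun q ⟨hx, hy⟩ => ⟨nodup_append_of_isRotated hd' hx hy,
      hx.perm.length_eq.trans hπ.symm, hy.perm.length_eq.trans hσ.symm⟩
  · rw [Multiset.map_prodMap_product, Multiset.map_prodMap_product,
      map_Des_cyclicPermutations_congr hπ hcπ, map_Des_cyclicPermutations_congr hσ hcσ]

section RotationClosed

variable {F : Finset (List ℕ)} {L : ℕ}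

lemma count_rotatePos_map_cDes (hF : ∀ τ ∈ F, τ.length = L)
    (hrot : ∀ τ ∈ F, ∀ k, τ.rotate k ∈ F) (r : ℕ) (S : Finset ℕ) :
    (F.val.map cDes).count (rotatePos L r S) = (F.val.map cDes).count S := by
  have hF_rot : F.map ⟨(·.rotate r), List.rotate_injective r⟩ = F :=
    Finset.eq_of_subset_of_card_le (fun _ h => by
      obtain ⟨τ, hτ, rfl⟩ := Finset.mem_map.1 h
      exact hrot τ hτ r) (Finset.card_map _).ge
  have hD : (F.val.map cDes).map (rotatePos L r) = F.val.map cDes := by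
    conv_rhs => rw [← hF_rot]
    rw [Finset.map_val, Multiset.map_map, Multiset.map_map]
    exact Multiset.map_congr rfl fun τ hτ => by simp [cDes_rotate, hF τ hτ]
  conv_lhs => rw [← hD]
  exact Multiset.count_map_eq_count' (rotatePos L r) _ (Finset.map_injective _) S

lemma count_map_Des (hF : ∀ τ ∈ F, τ.length = L) {T : Finset ℕ} (hT : L ∉ T) :
    (F.val.map Des).count T = (F.val.map cDes).count T + (F.val.map cDes).count (insert L T) := by
  rw [← count_map_erase _ hT, Multiset.map_map]
  exact congrArg _ (Multiset.map_congr rfl fun τ hτ => by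
    rw [Function.comp_apply, Des_eq_cDes_erase, hF τ hτ])

lemma count_map_cDes_eq_zero (hL : L ≠ 0) (hF : ∀ τ ∈ F, τ.length = L) {S : Finset ℕ}
    (hS : S ⊆ Finset.Icc 1 L → S = Finset.Icc 1 L) : (F.val.map cDes).count S = 0 := by
  refine Multiset.count_eq_zero.2 fun hS' => ?_
  obtain ⟨τ, hτ, rfl⟩ := Multiset.mem_map.1 hS'
  refine cDes_ne_Icc (l := τ) (fun h => hL ?_) ?_
  · rw [← hF τ hτ, h, List.length_nil]
  · rw [hF τ hτ]
    exact hS (hF τ hτ ▸ cDes_subset_Icc τ)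

/-- Induction on the number of positions missing from `S`: rotating a missing position to `L`
and using `Des = cDes \ {L}` expresses the count of `S` through one larger set. -/
theorem map_cDes_eq_of_map_Des_eq {F' : Finset (List ℕ)} (hL : L ≠ 0)
    (hF : ∀ τ ∈ F, τ.length = L) (hF' : ∀ τ ∈ F', τ.length = L)
    (hrot : ∀ τ ∈ F, ∀ k, τ.rotate k ∈ F) (hrot' : ∀ τ ∈ F', ∀ k, τ.rotate k ∈ F')
    (h : F.val.map Des = F'.val.map Des) : F.val.map cDes = F'.val.map cDes := by
  ext S
  induction hk : (Finset.Icc 1 L \ S).card using Nat.strong_induction_on generalizing S with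
  | _ k ih =>
  by_cases hS : S ⊆ Finset.Icc 1 L ∧ S ≠ Finset.Icc 1 L
  · obtain ⟨j, hj, hjS⟩ := Finset.not_subset.1 fun h => hS.2 (hS.1.antisymm h)
    have hLS := notMem_rotatePos_of_notMem hj hjS
    have hcard : (Finset.Icc 1 L \ insert L (rotatePos L j S)).card < k := by
      rw [Finset.sdiff_insert, Finset.card_erase_of_mem (Finset.mem_sdiff.2
        ⟨Finset.mem_Icc.2 ⟨Nat.one_le_iff_ne_zero.2 hL, le_rfl⟩, hLS⟩),
        card_Icc_sdiff_rotatePos, hk]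
      exact Nat.sub_lt (hk ▸ Finset.card_pos.2 ⟨j, Finset.mem_sdiff.2 ⟨hj, hjS⟩⟩) one_pos
    have hcount := congrArg (Multiset.count (rotatePos L j S)) h
    rwa [count_map_Des hF hLS, count_map_Des hF' hLS, ih _ hcard _ rfl, Nat.add_right_cancel_iff,
      count_rotatePos_map_cDes hF hrot, count_rotatePos_map_cDes hF' hrot'] at hcount
  · rw [count_map_cDes_eq_zero hL hF (by tauto), count_map_cDes_eq_zero hL hF' (by tauto)]

end RotationClosed

lemma isCyclicShuffle_iff_mem_shufflesOfRotations {π σ τ : List ℕ} (hd : (π ++ σ).Nodup) :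
    IsCyclicShuffle π σ τ ↔ τ ∈ shufflesOfRotations π σ := by
  constructor
  · rintro ⟨i, j, k, h⟩
    have hx : π.rotate i ~r π := (List.IsRotated.symm ⟨i, rfl⟩)
    have hy : σ.rotate j ~r σ := (List.IsRotated.symm ⟨j, rfl⟩)
    have hk := mem_shufflesOfRotations.2 ⟨_, _, hx, hy,
      (isShuffle_iff_mem_shuffles (nodup_append_of_isRotated hd hx hy)).1 h⟩
    obtain ⟨r, hr⟩ := (List.IsRotated.symm ⟨k, rfl⟩ : τ.rotate k ~r τ)
    exact hr ▸ rotate_mem_shufflesOfRotations hd hk r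
  · intro h
    obtain ⟨x, y, hx, hy, hτ⟩ := mem_shufflesOfRotations.1 h
    obtain ⟨i, rfl⟩ := hx.symm
    obtain ⟨j, rfl⟩ := hy.symm
    exact ⟨i, j, 0, by
      rwa [List.rotate_zero, isShuffle_iff_mem_shuffles (nodup_append_of_isRotated hd hx hy)]⟩

lemma cycShuffleFiber_eq {A : Type*} [DecidableEq A] (cst : List ℕ → A) {π σ : List ℕ}
    (hd : (π ++ σ).Nodup) (v : A) :
    cycShuffleFiber cst π σ v =
      ↑(((shufflesOfRotations π σ).filter (cst · = v)).image ((↑) : List ℕ → Cycle ℕ)) := by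
  ext c
  simp [cycShuffleFiber, isCyclicShuffle_iff_mem_shufflesOfRotations hd, and_comm]

lemma card_image_coe_mul {F : Finset (List ℕ)} {L : ℕ} (hL : L ≠ 0)
    (hF : ∀ τ ∈ F, τ.Nodup ∧ τ.length = L) (hrot : ∀ τ ∈ F, ∀ k, τ.rotate k ∈ F) :
    (F.image ((↑) : List ℕ → Cycle ℕ)).card * L = F.card := by
  rw [Finset.card_eq_sum_card_fiberwise (f := ((↑) : List ℕ → Cycle ℕ))
    (t := F.image (↑)) fun τ hτ => Finset.mem_image_of_mem _ hτ]
  refine (Finset.sum_const_nat fun c hc => ?_).symm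
  obtain ⟨τ₀, hτ₀, rfl⟩ := Finset.mem_image.1 hc
  have hfiber : F.filter (fun τ : List ℕ => (τ : Cycle ℕ) = τ₀) =
      τ₀.cyclicPermutations.toFinset := by
    ext τ
    simp only [Finset.mem_filter, Cycle.coe_eq_coe, List.mem_toFinset,
      List.mem_cyclicPermutations_iff]
    refine ⟨And.right, fun h => ⟨?_, h⟩⟩
    obtain ⟨r, rfl⟩ := h.symm
    exact hrot τ₀ hτ₀ r
  rw [hfiber, List.toFinset_card_of_nodup (hF τ₀ hτ₀).1.cyclicPermutations,
    List.length_cyclicPermutations_of_ne_nil _ fun h => hL (by simp [← (hF τ₀ hτ₀).2, h]),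
    (hF τ₀ hτ₀).2]

lemma ncard_cycShuffleFiber_mul {π σ : List ℕ} (hd : (π ++ σ).Nodup)
    (hL : π.length + σ.length ≠ 0) (v : Multiset (Finset ℕ)) :
    (cycShuffleFiber (cycStat cDes) π σ v).ncard * (π.length + σ.length) =
      ((shufflesOfRotations π σ).val.map cDes).countP fun S =>
        (Multiset.range (π.length + σ.length)).map (rotatePos (π.length + σ.length) · S) = v := by
  have hlen {τ : List ℕ} := @length_eq_of_mem_shufflesOfRotations π σ τ
  rw [cycShuffleFiber_eq _ hd, Set.ncard_coe_finset, card_image_coe_mul hL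
    (fun τ hτ => ⟨nodup_of_mem_shufflesOfRotations hd (Finset.mem_filter.1 hτ).1,
      hlen (Finset.mem_filter.1 hτ).1⟩)
    (fun τ hτ k => Finset.mem_filter.2 ⟨rotate_mem_shufflesOfRotations hd
      (Finset.mem_filter.1 hτ).1 k, by rw [cycStat_rotate]; exact (Finset.mem_filter.1 hτ).2⟩),
    Multiset.countP_map, ← Finset.card_val, Finset.filter_val]
  congr 1
  refine Multiset.filter_congr fun τ hτ => ?_
  simp only [cycStat, cDes_rotate, hlen hτ]

/-- The cyclic descent set `cDes` is cyclic shuffle-compatible. -/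
theorem cDes_cyclic_shuffle_compatible : CyclicShuffleCompatible (cycStat cDes) := by
  intro π σ π' σ' hπ hσ hπ' hσ' hdisj hdisj' hn hm hcπ hcσ v
  have hd : (π ++ σ).Nodup := List.nodup_append'.2 ⟨hπ.1, hσ.1, hdisj⟩
  have hd' : (π' ++ σ').Nodup := List.nodup_append'.2 ⟨hπ'.1, hσ'.1, hdisj'⟩
  by_cases hL : π.length + σ.length = 0
  · obtain ⟨rfl, rfl⟩ : π = [] ∧ σ = [] := by simpa using hL
    obtain ⟨rfl, rfl⟩ : π' = [] ∧ σ' = [] := by simp_all [eq_comm]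
    rfl
  have hL' : π'.length + σ'.length = π.length + σ.length := by omega
  have hdist : (shufflesOfRotations π σ).val.map cDes =
      (shufflesOfRotations π' σ').val.map cDes :=
    map_cDes_eq_of_map_Des_eq hL (fun τ => length_eq_of_mem_shufflesOfRotations)
      (fun τ hτ => hL' ▸ length_eq_of_mem_shufflesOfRotations hτ)
      (fun τ => rotate_mem_shufflesOfRotations hd) (fun τ => rotate_mem_shufflesOfRotations hd')
      (map_Des_shufflesOfRotations_congr hd hd' hn hm hcπ hcσ)
  refine Nat.eq_of_mul_eq_mul_right (Nat.pos_of_ne_zero hL) ?_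
  rw [ncard_cycShuffleFiber_mul hd hL, hdist, ← hL', ncard_cycShuffleFiber_mul hd' (hL' ▸ hL)]
end

section
/- For every integer n ≥ 2, the set of pairs {(cpk π, cdes π) : π a permutation of length n} has exactly ⌊n²/4⌋ elements; equivalently, the number of (cpk, cdes)-equivalence classes of cyclic permutations of length n is ⌊n²/4⌋. -/
/-!
Read with indices from `0`, a cyclic peak is a descent whose cyclic predecessor is an ascent.
Hence peaks are descents (`cpk ≤ cdes`), and shifting each peak back by one position maps the
peaks injectively into the ascents (`cpk + cdes ≤ n`); the position of the maximum is a peak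
(`1 ≤ cpk`). Conversely, every pair `1 ≤ j ≤ k ≤ n - j` is attained by a permutation made of one
long descending run, `j - 1` zigzags and one long ascending run, and there are `⌊n² / 4⌋` such
pairs.
-/

open Finset

lemma succ_mod_eq_ite {p n : ℕ} (hp : p < n) :
    (p + 1) % n = if p + 1 = n then 0 else p + 1 := by
  split_ifs with h
  · simp [h]
  · exact Nat.mod_eq_of_lt (by omega)

lemma add_sub_one_mod_eq_ite {p n : ℕ} (hp : p < n) :
    (p + n - 1) % n = if p = 0 then n - 1 else p - 1 := by
  split_ifs with h
  · rw [h, zero_add]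
    exact Nat.mod_eq_of_lt (by omega)
  · rw [show p + n - 1 = p - 1 + n by omega, Nat.add_mod_right, Nat.mod_eq_of_lt (by omega)]

lemma succ_mod_add_sub_one_mod {p n : ℕ} (hp : p < n) : ((p + n - 1) % n + 1) % n = p := by
  rw [add_sub_one_mod_eq_ite hp, succ_mod_eq_ite (by split_ifs <;> omega)]
  split_ifs <;> omega

-- Indexed from `0`: position `p` here is position `p + 1` in `cDes` and `cPk`.
def cycDescents (n : ℕ) (f : ℕ → ℕ) : Finset ℕ :=
  (range n).filter fun p => f ((p + 1) % n) < f p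

def cycPeaks (n : ℕ) (f : ℕ → ℕ) : Finset ℕ :=
  (range n).filter fun p => f ((p + n - 1) % n) < f p ∧ f ((p + 1) % n) < f p

section CyclicSequence

variable {n : ℕ} {f : ℕ → ℕ}

lemma cycPeaks_subset_cycDescents : cycPeaks n f ⊆ cycDescents n f :=
  monotone_filter_right _ fun _ _ h => h.2

lemma add_sub_one_mod_notMem_cycDescents {p : ℕ} (hp : p ∈ cycPeaks n f) :
    (p + n - 1) % n ∉ cycDescents n f := by
  simp only [cycPeaks, cycDescents, mem_filter, mem_range] at hp ⊢
  rw [succ_mod_add_sub_one_mod hp.1]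
  exact fun h => h.2.not_gt hp.2.1

lemma card_cycPeaks_add_card_cycDescents_le : #(cycPeaks n f) + #(cycDescents n f) ≤ n := by
  have hpred : Set.InjOn (fun p => (p + n - 1) % n) (cycPeaks n f) :=
    Set.LeftInvOn.injOn (f₁' := fun p => (p + 1) % n) fun p hp =>
      succ_mod_add_sub_one_mod (mem_range.1 (mem_filter.1 hp).1)
  have hsub : (cycPeaks n f).image (fun p => (p + n - 1) % n) ⊆ range n \ cycDescents n f := by
    intro q hq
    obtain ⟨p, hp, rfl⟩ := mem_image.1 hq
    have hpn : p < n := mem_range.1 (mem_filter.1 hp).1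
    exact mem_sdiff.2 ⟨mem_range.2 (Nat.mod_lt _ (by omega)),
      add_sub_one_mod_notMem_cycDescents hp⟩
  calc #(cycPeaks n f) + #(cycDescents n f)
      = #((cycPeaks n f).image fun p => (p + n - 1) % n) + #(cycDescents n f) := by
        rw [card_image_of_injOn hpred]
    _ ≤ #(range n \ cycDescents n f) + #(cycDescents n f) := by gcongr
    _ = n := by
        have hdes : cycDescents n f ⊆ range n := filter_subset _ _
        rw [card_sdiff_add_card_eq_card hdes, card_range]

section Injective

variable (hn : 2 ≤ n) (hf : Set.InjOn f (range n))
include hn hf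

/-- The position of the maximum is a cyclic peak. -/
lemma cycPeaks_nonempty : (cycPeaks n f).Nonempty := by
  obtain ⟨p, hp, hmax⟩ := exists_max_image (range n) f (nonempty_range_iff.2 (by omega))
  have hlt : ∀ q < n, q ≠ p → f q < f p := fun q hq hqp =>
    (hmax q (mem_range.2 hq)).lt_of_ne fun h => hqp (hf (mem_range.2 hq) hp h)
  rw [mem_range] at hp
  refine ⟨p, mem_filter.2 ⟨mem_range.2 hp, hlt _ (Nat.mod_lt _ (by omega)) ?_,
    hlt _ (Nat.mod_lt _ (by omega)) ?_⟩⟩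
  · rw [add_sub_one_mod_eq_ite hp]
    split_ifs <;> omega
  · rw [succ_mod_eq_ite hp]
    split_ifs <;> omega

lemma mem_cycPeaks_iff_of_injOn {p : ℕ} :
    p ∈ cycPeaks n f ↔ p ∈ cycDescents n f ∧ (p + n - 1) % n ∉ cycDescents n f := by
  refine ⟨fun hp => ⟨cycPeaks_subset_cycDescents hp, add_sub_one_mod_notMem_cycDescents hp⟩,
    fun ⟨hp, hq⟩ => ?_⟩
  simp only [cycPeaks, cycDescents, mem_filter, mem_range, not_and, not_lt] at hp hq ⊢
  have hqn : (p + n - 1) % n < n := Nat.mod_lt _ (by omega)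
  have hne : (p + n - 1) % n ≠ p := by
    rw [add_sub_one_mod_eq_ite hp.1]
    split_ifs <;> omega
  specialize hq hqn
  rw [succ_mod_add_sub_one_mod hp.1] at hq
  exact ⟨hp.1, hq.lt_of_ne fun h => hne (hf (mem_range.2 hqn) (mem_range.2 hp.1) h), hp.2⟩

end Injective

lemma cycDescents_congr {g : ℕ → ℕ} (h : ∀ p < n, f p = g p) :
    cycDescents n f = cycDescents n g :=
  filter_congr fun p hp => by
    rw [mem_range] at hp
    rw [h p hp, h _ (Nat.mod_lt _ (by omega))]

lemma cycPeaks_congr {g : ℕ → ℕ} (h : ∀ p < n, f p = g p) : cycPeaks n f = cycPeaks n g :=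
  filter_congr fun p hp => by
    rw [mem_range] at hp
    rw [h p hp, h _ (Nat.mod_lt _ (by omega)), h ((p + 1) % n) (Nat.mod_lt _ (by omega))]

end CyclicSequence

lemma cdes_eq_card_cycDescents (π : List ℕ) : cdes π = #(cycDescents π.length (π.getD · 0)) := by
  refine card_nbij' (· - 1) (· + 1) ?_ ?_ ?_ ?_ <;> intro i hi <;>
    simp only [cDes, cycDescents, mem_coe, mem_filter, mem_Icc, mem_range] at hi ⊢
  · rw [Nat.sub_add_cancel hi.1.1]
    exact ⟨by omega, hi.2⟩
  · exact ⟨by omega, hi.2⟩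
  · omega
  · omega

lemma cpk_eq_card_cycPeaks (π : List ℕ) : cpk π = #(cycPeaks π.length (π.getD · 0)) := by
  refine card_nbij' (· - 1) (· + 1) ?_ ?_ ?_ ?_ <;> intro i hi <;>
    simp only [cPk, cycPeaks, mem_coe, mem_filter, mem_Icc, mem_range] at hi ⊢
  · rw [show i - 1 + π.length - 1 = i + π.length - 2 by omega, Nat.sub_add_cancel hi.1.1]
    exact ⟨by omega, hi.2⟩
  · rw [show i + 1 + π.length - 2 = i + π.length - 1 by omega]
    exact ⟨by omega, hi.2⟩
  · omega
  · omega

lemma getD_injOn_range_length {π : List ℕ} (hπ : π.Nodup) :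
    Set.InjOn (π.getD · 0) (range π.length) := by
  intro p hp q hq h
  simp only [coe_range, Set.mem_Iio] at hp hq
  simp only [List.getD_eq_getElem _ _ hp, List.getD_eq_getElem _ _ hq] at h
  exact hπ.getElem_inj_iff.1 h

/-- The values `n`, then the descending run `k, …, j`, then the `j - 1` zigzags
`n - 1, j - 1, …, n - j + 1, 1`, then the ascending run `k + 1, …, n - j`. -/
def zigzag (n j k p : ℕ) : ℕ :=
  if p = 0 then n
  else if p ≤ k - j + 1 then k + 1 - p
  else if p < k + j then
    if (p - (k - j)) % 2 = 0 then n - (p - (k - j)) / 2 else j - (p - (k - j) - 1) / 2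
  else p + 1 - j

def zigzagPeaks (j k : ℕ) : Finset ℕ := (range (j - 1)).image fun t => k - j + 2 + 2 * t

section Zigzag

variable {n j k : ℕ}

lemma mem_zigzagPeaks (hjk : j ≤ k) {p : ℕ} :
    p ∈ zigzagPeaks j k ↔ k - j + 2 ≤ p ∧ p < k + j ∧ (p - (k - j)) % 2 = 0 := by
  simp only [zigzagPeaks, mem_image, mem_range]
  constructor
  · rintro ⟨t, ht, rfl⟩
    omega
  · rintro ⟨h₁, h₂, h₃⟩
    exact ⟨(p - (k - j) - 2) / 2, by omega, by omega⟩

lemma card_zigzagPeaks (j k : ℕ) : #(zigzagPeaks j k) = j - 1 := by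
  rw [zigzagPeaks, card_image_of_injective _ fun s t h => by omega, card_range]

variable (hj : 1 ≤ j) (hjk : j ≤ k) (hkn : j + k ≤ n)
include hj hjk hkn

lemma zigzag_injOn : Set.InjOn (zigzag n j k) (range n) := by
  intro p hp q hq h
  simp only [coe_range, Set.mem_Iio] at hp hq
  unfold zigzag at h
  split_ifs at h <;> omega

lemma zigzag_pos {p : ℕ} (hp : p < n) : 0 < zigzag n j k p := by
  unfold zigzag
  split_ifs <;> omega

lemma cycDescents_zigzag : cycDescents n (zigzag n j k) = range (k - j + 1) ∪ zigzagPeaks j k := by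
  ext p
  simp only [cycDescents, mem_filter, mem_union, mem_range, mem_zigzagPeaks hjk]
  by_cases hp : p < n
  · rw [succ_mod_eq_ite hp]
    unfold zigzag
    split_ifs <;> first | contradiction | omega
  · omega

lemma cycPeaks_zigzag : cycPeaks n (zigzag n j k) = insert 0 (zigzagPeaks j k) := by
  ext p
  rw [mem_cycPeaks_iff_of_injOn (by omega) (zigzag_injOn hj hjk hkn), cycDescents_zigzag hj hjk hkn]
  simp only [mem_union, mem_range, mem_insert, mem_zigzagPeaks hjk]
  by_cases hp : p < n
  · rw [add_sub_one_mod_eq_ite hp]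
    split_ifs <;> omega
  · omega

lemma exists_isPerm_cpk_cdes : ∃ π, IsPerm π ∧ π.length = n ∧ cpk π = j ∧ cdes π = k := by
  set π := (List.range n).map (zigzag n j k)
  have hlen : π.length = n := by simp [π]
  have hget : ∀ p < n, π.getD p 0 = zigzag n j k p := fun p hp => by simp [π, hp]
  refine ⟨π, ⟨?_, ?_⟩, hlen, ?_, ?_⟩
  · exact List.nodup_range.map_on fun p hp q hq h =>
      zigzag_injOn hj hjk hkn (by simpa using hp) (by simpa using hq) h
  · simp only [π, List.mem_map, List.mem_range]
    rintro _ ⟨p, hp, rfl⟩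
    exact zigzag_pos hj hjk hkn hp
  · rw [cpk_eq_card_cycPeaks, hlen, cycPeaks_congr hget, cycPeaks_zigzag hj hjk hkn,
      card_insert_of_notMem (by rw [mem_zigzagPeaks hjk]; omega), card_zigzagPeaks]
    omega
  · have hdisj : Disjoint (range (k - j + 1)) (zigzagPeaks j k) :=
      disjoint_left.2 fun p hp hp' => by
        rw [mem_range] at hp
        rw [mem_zigzagPeaks hjk] at hp'
        omega
    rw [cdes_eq_card_cycDescents, hlen, cycDescents_congr hget, cycDescents_zigzag hj hjk hkn,
      card_union_of_disjoint hdisj, card_range, card_zigzagPeaks]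
    omega

end Zigzag

def admissiblePairs (n : ℕ) : Finset (ℕ × ℕ) :=
  (Icc 1 n ×ˢ Icc 1 n).filter fun p => p.1 ≤ p.2 ∧ p.1 + p.2 ≤ n

lemma mem_admissiblePairs {n : ℕ} {p : ℕ × ℕ} :
    p ∈ admissiblePairs n ↔ 1 ≤ p.1 ∧ p.1 ≤ p.2 ∧ p.1 + p.2 ≤ n := by
  simp only [admissiblePairs, mem_filter, mem_product, mem_Icc]
  omega

lemma admissiblePairs_add_two (n : ℕ) :
    admissiblePairs (n + 2) =
      {1} ×ˢ Icc 1 (n + 1) ∪ (admissiblePairs n).map (addRightEmbedding (1, 1)) := by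
  ext ⟨a, b⟩
  simp only [mem_admissiblePairs, mem_union, mem_product, mem_singleton, mem_Icc, mem_map,
    addRightEmbedding_apply, Prod.exists, Prod.mk_add_mk, Prod.mk.injEq]
  constructor
  · rintro ⟨h₁, h₂, h₃⟩
    by_cases ha : a = 1
    · exact Or.inl ⟨ha, by omega, by omega⟩
    · exact Or.inr ⟨a - 1, b - 1, by omega, by omega, by omega⟩
  · rintro (⟨h₁, h₂⟩ | ⟨x, y, h, rfl, rfl⟩) <;> omega

lemma card_admissiblePairs : ∀ n, #(admissiblePairs n) = n ^ 2 / 4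
  | 0 => rfl
  | 1 => rfl
  | n + 2 => by
    have hdisj : Disjoint ({1} ×ˢ Icc 1 (n + 1))
        ((admissiblePairs n).map (addRightEmbedding (1, 1))) := by
      refine disjoint_left.2 fun p hp hp' => ?_
      obtain ⟨q, hq, rfl⟩ := mem_map.1 hp'
      simp only [mem_product, mem_singleton, addRightEmbedding_apply, Prod.fst_add] at hp
      have := (mem_admissiblePairs.1 hq).1
      omega
    rw [admissiblePairs_add_two, card_union_of_disjoint hdisj, card_map, card_product,
      card_singleton, Nat.card_Icc, card_admissiblePairs n,
      show (n + 2) ^ 2 = n ^ 2 + 4 * (n + 1) by ring]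
    omega

lemma cpk_cdes_mem_admissiblePairs {π : List ℕ} (hπ : π.Nodup) (hn : 2 ≤ π.length) :
    (cpk π, cdes π) ∈ admissiblePairs π.length := by
  rw [mem_admissiblePairs, cpk_eq_card_cycPeaks, cdes_eq_card_cycDescents]
  dsimp only
  exact ⟨card_pos.2 (cycPeaks_nonempty hn (getD_injOn_range_length hπ)),
    card_le_card cycPeaks_subset_cycDescents, card_cycPeaks_add_card_cycDescents_le⟩

/-- For `n ≥ 2`, the number of values of `(cpk, cdes)` on permutations of length `n`,
i.e. the number of `(cpk, cdes)`-equivalence classes of cyclic permutations of length `n`,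
is `⌊n² / 4⌋`. -/
theorem card_cpk_cdes_classes (n : ℕ) (hn : 2 ≤ n) :
    {p : ℕ × ℕ | ∃ π : List ℕ, IsPerm π ∧ π.length = n ∧ cpk π = p.1 ∧ cdes π = p.2}.ncard
      = n ^ 2 / 4 := by
  suffices h : {p : ℕ × ℕ | ∃ π : List ℕ, IsPerm π ∧ π.length = n ∧ cpk π = p.1 ∧ cdes π = p.2}
      = admissiblePairs n by
    rw [h, Set.ncard_coe_finset, card_admissiblePairs]
  ext ⟨j, k⟩
  refine ⟨?_, fun h => ?_⟩
  · rintro ⟨π, hπ, rfl, rfl, rfl⟩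
    exact cpk_cdes_mem_admissiblePairs hπ.1 hn
  · obtain ⟨hj, hjk, hkn⟩ := mem_admissiblePairs.1 h
    exact exists_isPerm_cpk_cdes hj hjk hkn
end

section
/- Let f be a rotation-preserving, length-preserving involution on permutations, and let st₁ and st₂ be f-equivalent linear permutation statistics. Then the induced multiset-valued cyclic statistics are f-equivalent: for all permutations π and σ of the same length, the multiset {{st₁ τ : τ ∈ [π^f]}} equals {{st₁ τ : τ ∈ [σ^f]}} if and only if the multiset {{st₂ τ : τ ∈ [π]}} equals {{st₂ τ : τ ∈ [σ]}}. -/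
/-- Two permutations have the same relative order (the same standardization). -/
def SameRelOrder (π σ : List ℕ) : Prop :=
  π.length = σ.length ∧ ∀ i j, i < π.length → j < π.length →
    (π.getD i 0 < π.getD j 0 ↔ σ.getD i 0 < σ.getD j 0)

/-- A linear permutation statistic: invariant under relative order. -/
def IsStatistic {A : Type*} (st : List ℕ → A) : Prop :=
  ∀ π σ, IsPerm π → IsPerm σ → SameRelOrder π σ → st π = st σ

/-- `f` is rotation-preserving: `[π]^f = [π^f]` for every permutation `π`. -/
def RotPreserving (f : List ℕ → List ℕ) : Prop :=
  ∀ π, IsPerm π → f '' {l | π.IsRotated l} = {l | (f π).IsRotated l}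

/-- `f` is shuffle-compatibility-preserving. -/
def ShuffleCompatPreserving (f : List ℕ → List ℕ) : Prop :=
  ∀ π σ, IsPerm π → IsPerm σ → π.Disjoint σ →
    ∃ πh σh, IsPerm πh ∧ IsPerm σh ∧ πh.Disjoint σh ∧
      SameRelOrder π πh ∧ SameRelOrder σ σh ∧
      f '' {τ | IsShuffle π σ τ} = {τ | IsShuffle (f πh) (f σh) τ} ∧
      f '' {τ | IsShuffle πh σh τ} = {τ | IsShuffle (f π) (f σ) τ}

private lemma isPerm_rotate {π : List ℕ} (h : IsPerm π) (i : ℕ) : IsPerm (π.rotate i) :=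
  ⟨List.nodup_rotate.2 h.1, fun x hx => h.2 x ((List.mem_rotate).1 hx)⟩

private lemma map_eq_map_iff' {γ X Y : Type*} (u : γ → X) (v : γ → Y) (s t : Multiset γ)
    (h : ∀ a, a ∈ s ∨ a ∈ t → ∀ b, b ∈ s ∨ b ∈ t → (u a = u b ↔ v a = v b)) :
    s.map u = t.map u ↔ s.map v = t.map v := by
  rw [← Multiset.rel_eq, ← Multiset.rel_eq, Multiset.rel_map, Multiset.rel_map]
  constructor
  · intro hr
    exact hr.mono fun a ha b hb hab => (h a (Or.inl ha) b (Or.inr hb)).1 hab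
  · intro hr
    exact hr.mono fun a ha b hb hab => (h a (Or.inl ha) b (Or.inr hb)).2 hab

/-- The multiset of rotations of `f π` equals the multiset of `f` applied to rotations of `π`. -/
private lemma rot_multiset_eq (f : List ℕ → List ℕ)
    (hf_perm : ∀ π, IsPerm π → IsPerm (f π))
    (hf_invol : ∀ π, IsPerm π → f (f π) = π)
    (hf_len : ∀ π, IsPerm π → (f π).length = π.length)
    (hf_rot : RotPreserving f)
    (π : List ℕ) (hπ : IsPerm π) (hne : π ≠ []) :
    (Multiset.range π.length).map (fun i => (f π).rotate i)
      = (Multiset.range π.length).map (fun i => f (π.rotate i)) := by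
  have hn : 0 < π.length := List.length_pos_iff.2 hne
  have hfπ : IsPerm (f π) := hf_perm π hπ
  have hfne : f π ≠ [] := by
    intro h0
    have := hf_len π hπ
    rw [h0] at this
    simp at this
    omega
  have hnd1 : ((Multiset.range π.length).map (fun i => (f π).rotate i)).Nodup := by
    refine (Multiset.nodup_range _).map_on ?_
    intro i hi j hj hij
    have := hfπ.1.rotate_congr hfne i j hij
    rw [hf_len π hπ] at this
    rwa [Nat.mod_eq_of_lt (Multiset.mem_range.1 hi), Nat.mod_eq_of_lt (Multiset.mem_range.1 hj)] at this
  have hnd2 : ((Multiset.range π.length).map (fun i => f (π.rotate i))).Nodup := by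
    refine (Multiset.nodup_range _).map_on ?_
    intro i hi j hj hij
    have h1 : π.rotate i = π.rotate j := by
      have := congrArg f hij
      rwa [hf_invol _ (isPerm_rotate hπ i), hf_invol _ (isPerm_rotate hπ j)] at this
    have := hπ.1.rotate_congr hne i j h1
    rwa [Nat.mod_eq_of_lt (Multiset.mem_range.1 hi), Nat.mod_eq_of_lt (Multiset.mem_range.1 hj)] at this
  rw [hnd1.ext hnd2]
  intro a
  have hset := hf_rot π hπ
  constructor
  · intro ha
    obtain ⟨i, hi, rfl⟩ := Multiset.mem_map.1 ha
    have hmem : (f π).rotate i ∈ {l | (f π).IsRotated l} := ⟨i, rfl⟩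
    rw [← hset] at hmem
    obtain ⟨l, hl, hfl⟩ := hmem
    obtain ⟨k, rfl⟩ := hl
    refine Multiset.mem_map.2 ⟨k % π.length, Multiset.mem_range.2 (Nat.mod_lt _ hn), ?_⟩
    rw [List.rotate_mod, hfl]
  · intro ha
    obtain ⟨i, hi, rfl⟩ := Multiset.mem_map.1 ha
    have hmem : f (π.rotate i) ∈ f '' {l | π.IsRotated l} := ⟨π.rotate i, ⟨i, rfl⟩, rfl⟩
    rw [hset] at hmem
    obtain ⟨k, hk⟩ := hmem
    refine Multiset.mem_map.2 ⟨k % π.length, Multiset.mem_range.2 (Nat.mod_lt _ hn), ?_⟩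
    rw [← hf_len π hπ, List.rotate_mod, hk]

/-- If `f` is a rotation-preserving, length-preserving involution on permutations and
`st₁`, `st₂` are `f`-equivalent linear statistics, then the induced multiset-valued
cyclic statistics are `f`-equivalent. -/
theorem induced_cyclic_f_equivalent {A B : Type*} (f : List ℕ → List ℕ)
    (hf_perm : ∀ π, IsPerm π → IsPerm (f π))
    (hf_invol : ∀ π, IsPerm π → f (f π) = π)
    (hf_len : ∀ π, IsPerm π → (f π).length = π.length)
    (hf_rot : RotPreserving f)
    (st₁ : List ℕ → A) (st₂ : List ℕ → B)
    (hst₁ : IsStatistic st₁) (hst₂ : IsStatistic st₂)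
    (hfeq : ∀ π σ, IsPerm π → IsPerm σ → π.length = σ.length →
      (st₁ (f π) = st₁ (f σ) ↔ st₂ π = st₂ σ)) :
    ∀ π σ, IsPerm π → IsPerm σ → π.length = σ.length →
      (cycStat st₁ (f π) = cycStat st₁ (f σ) ↔ cycStat st₂ π = cycStat st₂ σ) := by
  intro π σ hπ hσ hlen
  rcases Nat.eq_zero_or_pos π.length with h0 | hpos
  · have hπ0 : π = [] := List.length_eq_zero_iff.1 h0
    have hσ0 : σ = [] := List.length_eq_zero_iff.1 (hlen ▸ h0)
    subst hπ0; subst hσ0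
    simp [cycStat]
  have hne : π ≠ [] := List.length_pos_iff.1 hpos
  have hneσ : σ ≠ [] := List.length_pos_iff.1 (hlen ▸ hpos)
  have key1 : cycStat st₁ (f π) = ((Multiset.range π.length).map (fun i => π.rotate i)).map (fun l => st₁ (f l)) := by
    have h := congrArg (Multiset.map st₁) (rot_multiset_eq f hf_perm hf_invol hf_len hf_rot π hπ hne)
    simp only [cycStat, hf_len π hπ, Multiset.map_map, Function.comp] at h ⊢
    exact h
  have key1σ : cycStat st₁ (f σ) = ((Multiset.range σ.length).map (fun i => σ.rotate i)).map (fun l => st₁ (f l)) := by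
    have h := congrArg (Multiset.map st₁) (rot_multiset_eq f hf_perm hf_invol hf_len hf_rot σ hσ hneσ)
    simp only [cycStat, hf_len σ hσ, Multiset.map_map, Function.comp] at h ⊢
    exact h
  have key2 : cycStat st₂ π = ((Multiset.range π.length).map (fun i => π.rotate i)).map st₂ := by
    unfold cycStat; rw [Multiset.map_map]; rfl
  have key2σ : cycStat st₂ σ = ((Multiset.range σ.length).map (fun i => σ.rotate i)).map st₂ := by
    unfold cycStat; rw [Multiset.map_map]; rfl
  rw [key1, key1σ, key2, key2σ]
  apply map_eq_map_iff'
  intro a ha b hb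
  have hmem : ∀ c : List ℕ, (c ∈ (Multiset.range π.length).map (fun i => π.rotate i) ∨
      c ∈ (Multiset.range σ.length).map (fun i => σ.rotate i)) → IsPerm c ∧ c.length = π.length := by
    rintro c (hc | hc) <;> obtain ⟨i, hi, rfl⟩ := Multiset.mem_map.1 hc
    · exact ⟨isPerm_rotate hπ i, by simp⟩
    · exact ⟨isPerm_rotate hσ i, by simp [hlen]⟩
  obtain ⟨hpa, hla⟩ := hmem a ha
  obtain ⟨hpb, hlb⟩ := hmem b hb
  exact hfeq a b hpa hpb (hla.trans hlb.symm)
end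

section
/- The cyclic statistics pk and cpk are equivalent: for all permutations π and σ of the same length, the multiset {{pk π̄ : π̄ ∈ [π]}} equals the multiset {{pk σ̄ : σ̄ ∈ [σ]}} if and only if cpk π = cpk σ. -/
/-!
Read `π` of length `n` cyclically, as a word `ZMod n → ℕ`. The linear word `π.rotate r` has as
peaks exactly the cyclic peaks of `π` other than its two ends, the positions `r - 1` and `r`. Two
cyclic peaks are never adjacent, so with `k = cpk π` exactly `2k` rotations lose one peak and the
other `n - 2k` lose none: the rotations carry `2k` copies of `k - 1` and `n - 2k` copies of `k` as
values of `pk`. For `n ≥ 3` this multiset determines `k`. For `n ≤ 1` there are no cyclic peaks,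
and for `n = 2` the larger of two distinct entries is the only one.
-/

open Finset

theorem Multiset.map_ite_const {α β : Type*} (s : Multiset α) (p : α → Prop) [DecidablePred p]
    (x y : β) :
    s.map (fun r => if p r then x else y) =
      replicate (s.filter p).card x + replicate (s.filter fun r => ¬p r).card y := by
  conv_lhs => rw [← filter_add_not (p := p) s]
  rw [map_add, map_congr rfl fun r hr => if_pos (of_mem_filter hr),
    map_congr rfl fun r hr => if_neg (of_mem_filter (p := fun r => ¬p r) hr), map_const',
    map_const']

def peakDistribution (n k : ℕ) : Multiset ℕ :=
  Multiset.replicate (2 * k) (k - 1) + Multiset.replicate (n - 2 * k) k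

theorem peakDistribution_injective {n : ℕ} (hn : 3 ≤ n) :
    Function.Injective (peakDistribution n) := by
  intro k l h
  by_contra hne
  have hk := congrArg (Multiset.count (k - 1)) h
  have hl := congrArg (Multiset.count (l - 1)) h
  simp only [peakDistribution, Multiset.count_add, Multiset.count_replicate] at hk hl
  split_ifs at hk hl <;> omega

section Sparse

variable {G : Type*} [AddGroup G] [DecidableEq G] {P : Finset G} {d : G}

theorem card_filter_ne_and_ne_sub (hP : ∀ j ∈ P, j + d ∉ P) (r : G) :
    #(P.filter fun j => j ≠ r ∧ j ≠ r - d) = if r ∈ P ∨ r - d ∈ P then #P - 1 else #P := by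
  split_ifs with h
  · rcases h with h | h
    · have h' : r - d ∉ P := fun h' => hP _ h' (by rwa [sub_add_cancel])
      rw [filter_congr fun j hj => and_iff_left (ne_of_mem_of_not_mem hj h'), filter_ne',
        card_erase_of_mem h]
    · have h' : r ∉ P := by simpa using hP _ h
      rw [filter_congr fun j hj => and_iff_right (ne_of_mem_of_not_mem hj h'), filter_ne',
        card_erase_of_mem h]
  · rw [not_or] at h
    rw [filter_true_of_mem fun j hj => ⟨ne_of_mem_of_not_mem hj h.1, ne_of_mem_of_not_mem hj h.2⟩]

variable [Fintype G]

theorem card_filter_mem_or_sub_mem (hP : ∀ j ∈ P, j + d ∉ P) :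
    #(univ.filter fun r => r ∈ P ∨ r - d ∈ P) = 2 * #P := by
  have hshift : #(univ.filter fun r => r - d ∈ P) = #P :=
    card_equiv (Equiv.subRight d) (by simp)
  have hdisj : Disjoint P (univ.filter fun r => r - d ∈ P) :=
    disjoint_left.mpr fun r hr hr' => hP _ (mem_filter.mp hr').2 (by rwa [sub_add_cancel])
  rw [filter_or, filter_mem_eq_inter, univ_inter, card_union_of_disjoint hdisj, hshift, two_mul]

theorem map_univ_card_filter_ne_and_ne_sub (hP : ∀ j ∈ P, j + d ∉ P) :
    univ.val.map (fun r => #(P.filter fun j => j ≠ r ∧ j ≠ r - d)) =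
      peakDistribution (Fintype.card G) #P := by
  have hcard := card_filter_mem_or_sub_mem hP
  have hsplit := card_filter_add_card_filter_not (s := univ) (fun r => r ∈ P ∨ r - d ∈ P)
  rw [Multiset.map_congr rfl fun r _ => card_filter_ne_and_ne_sub hP r, Multiset.map_ite_const,
    peakDistribution, ← filter_val, ← filter_val, card_val, card_val, hcard]
  rw [card_univ, hcard] at hsplit
  rw [← hsplit, Nat.add_sub_cancel_left]

end Sparse

namespace ZMod

theorem map_natCast_range (n : ℕ) [NeZero n] :
    (Multiset.range n).map (Nat.cast : ℕ → ZMod n) = univ.val := by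
  refine (Multiset.Nodup.ext ?_ univ.nodup).mpr fun j => ?_
  · exact (Multiset.nodup_range n).map_on fun a ha b hb hab => by
      simpa [val_natCast, Nat.mod_eq_of_lt (Multiset.mem_range.mp ha),
        Nat.mod_eq_of_lt (Multiset.mem_range.mp hb)] using congrArg val hab
  · simpa using ⟨j.val, val_lt j, natCast_zmod_val j⟩

theorem natCast_eq_zero_iff_of_lt {n m : ℕ} (hm : m < n) : (m : ZMod n) = 0 ↔ m = 0 := by
  rw [natCast_eq_zero_iff]
  exact ⟨fun h => Nat.eq_zero_of_dvd_of_lt h hm, fun h => h ▸ dvd_zero n⟩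

theorem natCast_eq_neg_one_iff {n m : ℕ} (hm : m < n) : (m : ZMod n) = -1 ↔ m + 1 = n := by
  rw [eq_neg_iff_add_eq_zero, ← Nat.cast_succ, natCast_eq_zero_iff]
  exact ⟨fun h => le_antisymm hm (Nat.le_of_dvd m.succ_pos h), fun h => h ▸ dvd_rfl⟩

theorem card_eq_of_forall_succ_mem_iff {n : ℕ} [NeZero n] {s : Finset ℕ} {t : Finset (ZMod n)}
    (hs : s ⊆ Icc 1 n) (h : ∀ m < n, m + 1 ∈ s ↔ (m : ZMod n) ∈ t) : #s = #t := by
  have hs' : ∀ i ∈ s, i - 1 < n ∧ i - 1 + 1 = i := fun i hi => by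
    have := mem_Icc.mp (hs hi); omega
  refine card_nbij' (fun i => ((i - 1 : ℕ) : ZMod n)) (fun j => j.val + 1) ?_ ?_ ?_ ?_
  · intro i hi
    obtain ⟨hlt, heq⟩ := hs' i hi
    exact (h _ hlt).mp (heq ▸ hi)
  · intro j hj
    exact (h _ (val_lt j)).mpr (by rwa [natCast_zmod_val])
  · intro i hi
    obtain ⟨hlt, heq⟩ := hs' i hi
    simp [val_natCast, Nat.mod_eq_of_lt hlt, heq]
  · intro j _
    simp

end ZMod

section CyclicPeaks

variable {α : Type*} [Preorder α] [DecidableLT α] {n : ℕ} [NeZero n]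

def cyclicPeaks (a : ZMod n → α) : Finset (ZMod n) :=
  univ.filter fun i => a (i - 1) < a i ∧ a (i + 1) < a i

theorem add_one_notMem_cyclicPeaks {a : ZMod n → α} {j : ZMod n} (hj : j ∈ cyclicPeaks a) :
    j + 1 ∉ cyclicPeaks a := by
  simp only [cyclicPeaks, mem_filter, mem_univ, true_and, add_sub_cancel_right] at hj ⊢
  exact fun h => lt_asymm hj.2 h.1

theorem mem_cyclicPeaks_comp_add {a : ZMod n → α} {c j : ZMod n} :
    j ∈ cyclicPeaks (fun i => a (i + c)) ↔ j + c ∈ cyclicPeaks a := by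
  simp [cyclicPeaks, sub_add_eq_add_sub, add_right_comm]

end CyclicPeaks

theorem List.getD_rotate {π : List ℕ} {k : ℕ} (hk : k < π.length) (r : ℕ) :
    (π.rotate r).getD k 0 = π.getD ((k + r) % π.length) 0 := by
  have hn : 0 < π.length := lt_of_le_of_lt (Nat.zero_le _) hk
  rw [List.getD_eq_getElem _ _ (by simpa using hk), List.getD_eq_getElem _ _ (Nat.mod_lt _ hn),
    List.getElem_rotate]

def cyclicWord (n : ℕ) (π : List ℕ) : ZMod n → ℕ := fun i => π.getD i.val 0

theorem cyclicWord_natCast {n : ℕ} [NeZero n] (π : List ℕ) (k : ℕ) :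
    cyclicWord n π k = π.getD (k % n) 0 := by
  rw [cyclicWord, ZMod.val_natCast]

theorem cyclicWord_rotate {n : ℕ} [NeZero n] {π : List ℕ} (hn : π.length = n) (r : ℕ) :
    cyclicWord n (π.rotate r) = fun i => cyclicWord n π (i + r) := by
  funext i
  rw [cyclicWord, cyclicWord, List.getD_rotate (hn ▸ ZMod.val_lt i), ZMod.val_add,
    ZMod.val_natCast, Nat.add_mod_mod, hn]

theorem natCast_mem_cyclicPeaks_cyclicWord_iff {n : ℕ} [NeZero n] {π : List ℕ} {k : ℕ}
    (hk : k < n) :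
    (k : ZMod n) ∈ cyclicPeaks (cyclicWord n π) ↔
      π.getD ((k + n - 1) % n) 0 < π.getD k 0 ∧ π.getD ((k + 1) % n) 0 < π.getD k 0 := by
  have hpred : (k : ZMod n) - 1 = ((k + n - 1 : ℕ) : ZMod n) := by
    rw [Nat.cast_sub (by omega), Nat.cast_add, ZMod.natCast_self, add_zero, Nat.cast_one]
  have hsucc : (k : ZMod n) + 1 = ((k + 1 : ℕ) : ZMod n) := by push_cast; rfl
  simp only [cyclicPeaks, mem_filter, mem_univ, true_and, hpred, hsucc, cyclicWord_natCast,
    Nat.mod_eq_of_lt hk]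

theorem succ_mem_cPk_iff {n : ℕ} [NeZero n] {π : List ℕ} (hn : π.length = n) {m : ℕ}
    (hm : m < n) : m + 1 ∈ cPk π ↔ (m : ZMod n) ∈ cyclicPeaks (cyclicWord n π) := by
  rw [natCast_mem_cyclicPeaks_cyclicWord_iff hm, show m + n - 1 = m + 1 + n - 2 by omega]
  simp [cPk, hn, hm]

theorem succ_mem_Pk_iff {n : ℕ} [NeZero n] {π : List ℕ} (hn : π.length = n) {m : ℕ}
    (hm : m < n) :
    m + 1 ∈ Pk π ↔
      (m : ZMod n) ∈ (cyclicPeaks (cyclicWord n π)).filter fun j => j ≠ 0 ∧ j ≠ -1 := by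
  rw [mem_filter, natCast_mem_cyclicPeaks_cyclicWord_iff hm, ne_eq, ne_eq,
    ZMod.natCast_eq_zero_iff_of_lt hm, ZMod.natCast_eq_neg_one_iff hm]
  simp only [Pk, mem_filter, mem_Icc, hn, Nat.add_sub_cancel]
  by_cases hinner : m ≠ 0 ∧ m + 1 ≠ n
  · rw [show m + n - 1 = m - 1 + n by omega, Nat.add_mod_right, Nat.mod_eq_of_lt (by omega),
      Nat.mod_eq_of_lt (show m + 1 < n by omega), show m + 1 - 2 = m - 1 by omega]
    exact ⟨fun h => ⟨h.2, hinner⟩, fun h => ⟨by omega, h.1⟩⟩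
  · constructor
    · rintro ⟨h, -⟩; omega
    · rintro ⟨-, h⟩; exact absurd h hinner

theorem cpk_eq_card_cyclicPeaks {n : ℕ} [NeZero n] {π : List ℕ} (hn : π.length = n) :
    cpk π = #(cyclicPeaks (cyclicWord n π)) :=
  ZMod.card_eq_of_forall_succ_mem_iff (hn ▸ filter_subset _ _) fun _ hm => succ_mem_cPk_iff hn hm

theorem pk_eq_card_filter_cyclicPeaks {n : ℕ} [NeZero n] {π : List ℕ} (hn : π.length = n) :
    pk π = #((cyclicPeaks (cyclicWord n π)).filter fun j => j ≠ 0 ∧ j ≠ -1) := by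
  refine ZMod.card_eq_of_forall_succ_mem_iff (fun i hi => ?_) fun _ hm => succ_mem_Pk_iff hn hm
  have := mem_Icc.mp (mem_filter.mp hi).1
  exact mem_Icc.mpr ⟨by omega, by omega⟩

theorem pk_rotate {n : ℕ} [NeZero n] {π : List ℕ} (hn : π.length = n) (r : ℕ) :
    pk (π.rotate r) = #((cyclicPeaks (cyclicWord n π)).filter fun j =>
      j ≠ (r : ZMod n) ∧ j ≠ (r : ZMod n) - 1) := by
  rw [pk_eq_card_filter_cyclicPeaks ((π.length_rotate r).trans hn), cyclicWord_rotate hn]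
  refine card_equiv (Equiv.addRight (r : ZMod n)) fun j => ?_
  simp [mem_cyclicPeaks_comp_add, ← neg_add_eq_sub]

theorem cycStat_pk_eq_peakDistribution (π : List ℕ) :
    cycStat pk π = peakDistribution π.length (cpk π) := by
  obtain h | h := Nat.eq_zero_or_pos π.length
  · simp [cycStat, peakDistribution, cpk, cPk, h]
  have : NeZero π.length := ⟨h.ne'⟩
  calc cycStat pk π = univ.val.map fun r : ZMod π.length =>
        #((cyclicPeaks (cyclicWord π.length π)).filter fun j => j ≠ r ∧ j ≠ r - 1) := by
        rw [cycStat, ← ZMod.map_natCast_range, Multiset.map_map]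
        exact Multiset.map_congr rfl fun r _ => pk_rotate rfl r
    _ = peakDistribution π.length (cpk π) := by
        rw [map_univ_card_filter_ne_and_ne_sub fun _ => add_one_notMem_cyclicPeaks, ZMod.card,
          cpk_eq_card_cyclicPeaks rfl]

theorem two_mul_cpk_le_length (π : List ℕ) : 2 * cpk π ≤ π.length := by
  obtain h | h := Nat.eq_zero_or_pos π.length
  · simp [cpk, cPk, h]
  have : NeZero π.length := ⟨h.ne'⟩
  rw [cpk_eq_card_cyclicPeaks rfl,
    ← card_filter_mem_or_sub_mem fun _ => add_one_notMem_cyclicPeaks]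
  exact (card_filter_le _ _).trans_eq (by rw [card_univ, ZMod.card])

theorem cpk_eq_one_of_length_eq_two {π : List ℕ} (hπ : π.Nodup) (h : π.length = 2) :
    cpk π = 1 := by
  obtain ⟨a, b, rfl⟩ := List.length_eq_two.mp h
  have hab : a ≠ b := by simpa using hπ
  have hIcc : Icc 1 2 = {1, 2} := by decide
  rw [cpk, cPk, h, hIcc]
  rcases hab.lt_or_gt with hlt | hlt <;> simp [filter_insert, filter_singleton, hlt, hlt.not_gt]

/-- The cyclic statistics `pk` and `cpk` are equivalent. -/
theorem pk_cpk_equivalent (π σ : List ℕ) (hπ : IsPerm π) (hσ : IsPerm σ)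
    (hlen : π.length = σ.length) :
    cycStat pk π = cycStat pk σ ↔ cpk π = cpk σ := by
  rw [cycStat_pk_eq_peakDistribution, cycStat_pk_eq_peakDistribution, ← hlen]
  refine ⟨fun h => ?_, congrArg _⟩
  obtain hn | hn | hn : π.length ≤ 1 ∨ π.length = 2 ∨ 3 ≤ π.length := by omega
  · have := two_mul_cpk_le_length π
    have := two_mul_cpk_le_length σ
    omega
  · rw [cpk_eq_one_of_length_eq_two hπ.1 hn, cpk_eq_one_of_length_eq_two hσ.1 (hlen ▸ hn)]
  · exact peakDistribution_injective hn h
end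

section
/- The cyclic statistics cDes and ocmaj are equivalent: for all permutations π and σ of the same length n ≥ 1, defining π^{(1)} = π and π^{(i+1)} to be the permutation obtained from π^{(i)} by moving its last letter to the front (and similarly σ^{(1)} = σ, etc.), the multiset {{cDes π̄ : π̄ ∈ [π]}} equals the multiset {{cDes σ̄ : σ̄ ∈ [σ]}} if and only if the list (cmaj π^{(1)}, cmaj π^{(2)}, …, cmaj π^{(n)}) is a cyclic rotation of the list (cmaj σ^{(1)}, cmaj σ^{(2)}, …, cmaj σ^{(n)}). -/
/-- Move the last letter of a list to the front. -/
def rotLast (l : List ℕ) : List ℕ := l.rotate (l.length - 1)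

open Finset

theorem Finset.sum_range_add_mod {M : Type*} [AddCommMonoid M] (f : ℕ → M) (m n : ℕ) :
    ∑ i ∈ Finset.range n, f ((m + i) % n) = ∑ i ∈ Finset.range n, f i := by
  rcases Nat.eq_zero_or_pos n with rfl | hn
  · simp
  have : NeZero n := ⟨hn.ne'⟩
  rw [← Fin.sum_univ_eq_sum_range, ← Fin.sum_univ_eq_sum_range f]
  exact Fintype.sum_equiv (Equiv.addLeft (Fin.ofNat n m)) _ _ fun i => by simp [Fin.val_add]

theorem List.getD_rotate_mod {α : Type*} (l : List α) (j m : ℕ) (d : α) :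
    (l.rotate j).getD (m % l.length) d = l.getD ((m + j) % l.length) d := by
  obtain rfl | hl := eq_or_ne l []
  · simp
  have hpos := List.length_pos_iff.2 hl
  rw [List.getD_eq_getElem _ _ (by simpa using Nat.mod_lt m hpos),
    List.getD_eq_getElem _ _ (Nat.mod_lt _ hpos), List.getElem_rotate]
  simp only [Nat.mod_add_mod]

section Orbit
variable {α : Type*}

def orbitList (f : α → α) (n : ℕ) (x : α) : List α := (List.range n).map fun i => f^[i] x

variable {f : α → α} {n : ℕ} {x y : α}

theorem orbitList_rotate (hx : Function.IsPeriodicPt f n x) (j : ℕ) :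
    (orbitList f n x).rotate j = orbitList f n (f^[j] x) := by
  refine List.ext_getElem (by simp [orbitList]) fun i h₁ h₂ => ?_
  simp only [orbitList, List.length_map, List.length_range] at h₂
  simp [orbitList, List.getElem_rotate, hx.iterate_mod_apply, ← Function.iterate_add_apply]

theorem orbitList_perm_iff (hn : 0 < n) (hx : Function.IsPeriodicPt f n x) :
    (orbitList f n x).Perm (orbitList f n y) ↔ ∃ j, f^[j] x = y := by
  constructor
  · intro h
    obtain ⟨j, -, hj⟩ := List.mem_map.1 <| h.symm.subset <|
      List.mem_map.2 ⟨0, List.mem_range.2 hn, rfl⟩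
    exact ⟨j, hj⟩
  · rintro ⟨j, rfl⟩
    rw [← orbitList_rotate hx]
    exact (List.rotate_perm _ _).symm

end Orbit

-- addition of `j` modulo `n` on the representatives `1, …, n`
def cycAdd (n j k : ℕ) : ℕ := (k - 1 + j) % n + 1

section CycAdd
variable {n j k : ℕ}

theorem cycAdd_mem_Icc (hn : 0 < n) : cycAdd n j k ∈ Icc 1 n := by
  have := Nat.mod_lt (k - 1 + j) hn
  simp only [cycAdd, mem_Icc]
  omega

theorem cycAdd_zero (hk : k ∈ Icc 1 n) : cycAdd n 0 k = k := by
  rw [mem_Icc] at hk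
  rw [cycAdd, Nat.add_zero, Nat.mod_eq_of_lt (by omega)]
  omega

theorem cycAdd_cycAdd (i : ℕ) : cycAdd n i (cycAdd n j k) = cycAdd n (j + i) k := by
  simp only [cycAdd, Nat.add_sub_cancel, Nat.mod_add_mod, Nat.add_assoc]

theorem cycAdd_mod : cycAdd n (j % n) k = cycAdd n j k := by
  simp only [cycAdd, Nat.add_mod_mod]

theorem cycAdd_mul_self (hk : k ∈ Icc 1 n) (m : ℕ) : cycAdd n (n * m) k = k := by
  rw [← cycAdd_mod, Nat.mul_mod_right, cycAdd_zero hk]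

theorem cycAdd_cycAdd_sub_one_mul (hk : k ∈ Icc 1 n) :
    cycAdd n j (cycAdd n ((n - 1) * j) k) = k := by
  have hn : 1 ≤ n := (mem_Icc.1 hk).1.trans (mem_Icc.1 hk).2
  rw [cycAdd_cycAdd, ← Nat.add_one_mul, Nat.sub_add_cancel hn, cycAdd_mul_self hk]

theorem cycAdd_injOn : Set.InjOn (cycAdd n j) (Icc 1 n : Set ℕ) := by
  intro a ha b hb hab
  simp only [coe_Icc, Set.mem_Icc] at ha hb
  have : a - 1 ≡ b - 1 [MOD n] := Nat.ModEq.add_right_cancel' j (Nat.succ_injective hab)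
  rw [Nat.ModEq, Nat.mod_eq_of_lt (by omega), Nat.mod_eq_of_lt (by omega)] at this
  omega

theorem sum_range_cycAdd (k : ℕ) : ∑ j ∈ range n, cycAdd n j k = ∑ j ∈ range n, (j + 1) :=
  sum_range_add_mod (· + 1) (k - 1) n

end CycAdd

def cycShift (n : ℕ) (S : Finset ℕ) : Finset ℕ := S.image (cycAdd n 1)

section CycShift
variable {n : ℕ} {S T : Finset ℕ}

theorem iterate_cycShift (hS : S ⊆ Icc 1 n) (i : ℕ) :
    (cycShift n)^[i] S = S.image (cycAdd n i) := by
  induction i with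
  | zero => exact (image_congr fun k hk => cycAdd_zero (hS hk)).trans image_id' |>.symm
  | succ i ih =>
    rw [Function.iterate_succ_apply', ih, cycShift, image_image]
    exact image_congr fun k _ => cycAdd_cycAdd 1

theorem iterate_cycShift_subset (hn : 0 < n) (hS : S ⊆ Icc 1 n) (i : ℕ) :
    (cycShift n)^[i] S ⊆ Icc 1 n := by
  rw [iterate_cycShift hS]
  exact image_subset_iff.2 fun _ _ => cycAdd_mem_Icc hn

theorem isPeriodicPt_cycShift (hS : S ⊆ Icc 1 n) : Function.IsPeriodicPt (cycShift n) n S := by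
  rw [Function.IsPeriodicPt, Function.IsFixedPt, iterate_cycShift hS]
  exact (image_congr fun k hk => by simpa using cycAdd_mul_self (hS hk) 1).trans image_id'

theorem card_iterate_cycShift (hS : S ⊆ Icc 1 n) (i : ℕ) :
    ((cycShift n)^[i] S).card = S.card := by
  rw [iterate_cycShift hS]
  exact card_image_of_injOn (cycAdd_injOn.mono (coe_subset.2 hS))

theorem mem_iff_mem_iterate_cycShift (hS : S ⊆ Icc 1 n) {k : ℕ} (hk : k ∈ Icc 1 n) :
    k ∈ S ↔ n ∈ (cycShift n)^[n - k] S := by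
  have hk' := mem_Icc.1 hk
  have hkn : cycAdd n (n - k) k = n := by
    rw [cycAdd, show k - 1 + (n - k) = n - 1 by omega, Nat.mod_eq_of_lt (by omega)]
    omega
  rw [iterate_cycShift hS, ← mem_coe, ← mem_coe, coe_image, ← cycAdd_injOn.mem_image_iff
    (coe_subset.2 hS) (mem_coe.2 hk), hkn]

theorem sum_cycShift_add (hS : S ⊆ Icc 1 n) :
    ∑ k ∈ cycShift n S, k + (if n ∈ S then n else 0) = ∑ k ∈ S, k + S.card := by
  rw [cycShift, sum_image (cycAdd_injOn.mono (coe_subset.2 hS)), ← sum_ite_eq' S n fun _ => n,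
    card_eq_sum_ones, ← sum_add_distrib, ← sum_add_distrib]
  refine sum_congr rfl fun k hk => ?_
  have hk' := mem_Icc.1 (hS hk)
  rw [cycAdd, Nat.sub_add_cancel hk'.1]
  rcases hk'.2.lt_or_eq with hlt | rfl
  · rw [Nat.mod_eq_of_lt hlt, if_neg hlt.ne, Nat.add_zero]
  · rw [Nat.mod_self, if_pos rfl]
    omega

theorem sum_range_sum_iterate_cycShift (hS : S ⊆ Icc 1 n) :
    ∑ i ∈ range n, ∑ k ∈ (cycShift n)^[i] S, k = S.card * ∑ i ∈ range n, (i + 1) := by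
  simp_rw [iterate_cycShift hS, sum_image (cycAdd_injOn.mono (coe_subset.2 hS))]
  rw [sum_comm, sum_congr rfl fun k _ => sum_range_cycAdd k, sum_const, smul_eq_mul]

theorem eq_of_sum_iterate_cycShift_eq (hn : 0 < n) (hS : S ⊆ Icc 1 n) (hT : T ⊆ Icc 1 n)
    (h : ∀ i, ∑ k ∈ (cycShift n)^[i] S, k = ∑ k ∈ (cycShift n)^[i] T, k) : S = T := by
  have hcard : S.card = T.card := by
    have hpos : 0 < ∑ i ∈ range n, (i + 1) :=
      sum_pos (fun i _ => i.succ_pos) (nonempty_range_iff.2 hn.ne')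
    refine Nat.eq_of_mul_eq_mul_right hpos ?_
    rw [← sum_range_sum_iterate_cycShift hS, ← sum_range_sum_iterate_cycShift hT]
    exact sum_congr rfl fun i _ => h i
  have hmem : ∀ i, n ∈ (cycShift n)^[i] S ↔ n ∈ (cycShift n)^[i] T := by
    intro i
    have hS' := sum_cycShift_add (iterate_cycShift_subset hn hS i)
    have hT' := sum_cycShift_add (iterate_cycShift_subset hn hT i)
    rw [← Function.iterate_succ_apply' (cycShift n), h, card_iterate_cycShift hS, hcard, h,
      ← card_iterate_cycShift hT i, ← hT', Function.iterate_succ_apply',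
      Nat.add_left_cancel_iff] at hS'
    split_ifs at hS' <;> simp_all
  ext k
  by_cases hk : k ∈ Icc 1 n
  · rw [mem_iff_mem_iterate_cycShift hS hk, mem_iff_mem_iterate_cycShift hT hk, hmem]
  · exact iff_of_false (fun h => hk (hS h)) (fun h => hk (hT h))

end CycShift

theorem cDes_subset_Icc_s18 (π : List ℕ) : cDes π ⊆ Icc 1 π.length := filter_subset _ _

theorem mem_cDes_iff {π : List ℕ} {k : ℕ} : k ∈ cDes π ↔
    k ∈ Icc 1 π.length ∧ π.getD (k % π.length) 0 < π.getD ((k - 1) % π.length) 0 := by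
  rw [cDes, mem_filter]
  refine and_congr_right fun hk => ?_
  rw [Nat.mod_eq_of_lt (a := k - 1) (by have := mem_Icc.1 hk; omega)]

theorem mem_cDes_rotate_iff {π : List ℕ} {j k : ℕ} :
    k ∈ cDes (π.rotate j) ↔ k ∈ Icc 1 π.length ∧ cycAdd π.length j k ∈ cDes π := by
  obtain rfl | hπ := eq_or_ne π []
  · simp [cDes]
  have hn := List.length_pos_iff.2 hπ
  simp only [mem_cDes_iff, List.length_rotate, List.getD_rotate_mod, cycAdd_mem_Icc hn, true_and]
  refine and_congr_right fun hk => ?_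
  rw [cycAdd, Nat.add_sub_cancel, Nat.mod_mod, Nat.mod_add_mod,
    show k - 1 + j + 1 = k + j by have := (mem_Icc.1 hk).1; omega]

theorem cDes_eq_iterate_cycShift_cDes_rotate (π : List ℕ) (j : ℕ) :
    cDes π = (cycShift π.length)^[j] (cDes (π.rotate j)) := by
  rw [iterate_cycShift (π.length_rotate j ▸ cDes_subset_Icc_s18 _)]
  ext k
  simp only [mem_image, mem_cDes_rotate_iff]
  constructor
  · intro hk
    have hk' := cDes_subset_Icc_s18 π hk
    refine ⟨cycAdd π.length ((π.length - 1) * j) k, ⟨cycAdd_mem_Icc ?_, ?_⟩, ?_⟩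
    · exact (mem_Icc.1 hk').1.trans (mem_Icc.1 hk').2
    · rwa [cycAdd_cycAdd_sub_one_mul hk']
    · exact cycAdd_cycAdd_sub_one_mul hk'
  · rintro ⟨k, ⟨-, hk⟩, rfl⟩
    exact hk

theorem length_rotLast (l : List ℕ) : (rotLast l).length = l.length := List.length_rotate _ _

theorem rotLast_rotate_one (l : List ℕ) : (rotLast l).rotate 1 = l := by
  obtain rfl | hl := eq_or_ne l []
  · rfl
  rw [rotLast, List.rotate_rotate, Nat.sub_add_cancel (List.length_pos_iff.2 hl),
    List.rotate_length]

theorem cDes_rotLast (π : List ℕ) : cDes (rotLast π) = cycShift π.length (cDes π) := by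
  have h := cDes_eq_iterate_cycShift_cDes_rotate (rotLast π) 1
  rwa [rotLast_rotate_one, length_rotLast] at h

theorem cDes_iterate_rotLast (π : List ℕ) (i : ℕ) :
    cDes (rotLast^[i] π) = (cycShift π.length)^[i] (cDes π) := by
  induction i generalizing π with
  | zero => rfl
  | succ i ih =>
    rw [Function.iterate_succ_apply, Function.iterate_succ_apply, ih, length_rotLast, cDes_rotLast]

theorem cDes_rotate_s18 (π : List ℕ) (i : ℕ) :
    cDes (π.rotate i) = ((cycShift π.length)^[π.length - 1])^[i] (cDes π) := by
  obtain rfl | hπ := eq_or_ne π []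
  · simp [cDes]
  have hE : cDes (π.rotate i) ⊆ Icc 1 π.length := π.length_rotate i ▸ cDes_subset_Icc_s18 _
  rw [cDes_eq_iterate_cycShift_cDes_rotate π i, ← Function.iterate_mul,
    ← Function.iterate_add_apply, ← Nat.add_one_mul,
    Nat.sub_add_cancel (List.length_pos_iff.2 hπ)]
  exact ((isPeriodicPt_cycShift hE).mul_const i).eq.symm

theorem map_sum_orbitList_cycShift_inj {n : ℕ} {S T : Finset ℕ} (hn : 0 < n)
    (hS : S ⊆ Icc 1 n) (hT : T ⊆ Icc 1 n) :
    (orbitList (cycShift n) n S).map (fun U => ∑ k ∈ U, k) =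
      (orbitList (cycShift n) n T).map (fun U => ∑ k ∈ U, k) ↔ S = T := by
  refine ⟨fun h => eq_of_sum_iterate_cycShift_eq hn hS hT fun i => ?_, fun h => h ▸ rfl⟩
  simp only [orbitList, List.map_map, List.map_inj_left, List.mem_range, Function.comp_apply] at h
  rw [← (isPeriodicPt_cycShift hS).iterate_mod_apply,
    ← (isPeriodicPt_cycShift hT).iterate_mod_apply]
  exact h _ (Nat.mod_lt i hn)

theorem cycStat_cDes (π : List ℕ) :
    cycStat cDes π = (orbitList ((cycShift π.length)^[π.length - 1]) π.length (cDes π) :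
      Multiset (Finset ℕ)) := by
  rw [cycStat, orbitList, ← Multiset.coe_range, Multiset.map_coe]
  simp only [cDes_rotate_s18]

theorem map_cmaj_iterate_rotLast (π : List ℕ) :
    (List.range π.length).map (fun i => cmaj (rotLast^[i] π)) =
      (orbitList (cycShift π.length) π.length (cDes π)).map fun S => ∑ k ∈ S, k := by
  simp only [orbitList, List.map_map, Function.comp_def, cmaj, cDes_iterate_rotLast]

section Equivalence
variable {n : ℕ} {π σ : List ℕ}

theorem cycStat_cDes_eq_iff (hn : 0 < n) (hπ : π.length = n) (hσ : σ.length = n) :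
    cycStat cDes π = cycStat cDes σ ↔ ∃ j, (cycShift n)^[j] (cDes π) = cDes σ := by
  have hD := isPeriodicPt_cycShift (hπ ▸ cDes_subset_Icc_s18 π)
  have hE := isPeriodicPt_cycShift (hσ ▸ cDes_subset_Icc_s18 σ)
  rw [cycStat_cDes, cycStat_cDes, hπ, hσ, Multiset.coe_eq_coe]
  constructor
  · intro h
    obtain ⟨j, hj⟩ := (orbitList_perm_iff hn (hD.iterate _)).1 h
    exact ⟨(n - 1) * j, by rwa [Function.iterate_mul]⟩
  · rintro ⟨j, hj⟩
    -- `(cycShift n)^[n - 1]` inverts `cycShift n` on its periodic points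
    refine ((orbitList_perm_iff hn (hE.iterate _)).2 ⟨j, ?_⟩).symm
    rw [← hj, ← Function.iterate_mul, ← Function.iterate_add_apply, ← Nat.add_one_mul,
      Nat.sub_add_cancel hn]
    exact (hD.mul_const j).eq

theorem map_cmaj_isRotated_iff (hn : 0 < n) (hπ : π.length = n) (hσ : σ.length = n) :
    ((List.range n).map fun i => cmaj (rotLast^[i] π)).IsRotated
        ((List.range n).map fun i => cmaj (rotLast^[i] σ)) ↔
      ∃ j, (cycShift n)^[j] (cDes π) = cDes σ := by
  have hD := hπ ▸ cDes_subset_Icc_s18 π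
  have hE := hσ ▸ cDes_subset_Icc_s18 σ
  rw [← hπ, map_cmaj_iterate_rotLast, hπ, ← hσ, map_cmaj_iterate_rotLast, hσ]
  refine exists_congr fun j => ?_
  rw [← List.map_rotate, orbitList_rotate (isPeriodicPt_cycShift hD),
    map_sum_orbitList_cycShift_inj hn (iterate_cycShift_subset hn hD j) hE]

end Equivalence

theorem cDes_ocmaj_equivalent_general (n : ℕ) (hn : 1 ≤ n) (π σ : List ℕ)
    (hπn : π.length = n) (hσn : σ.length = n) :
    cycStat cDes π = cycStat cDes σ ↔
      ((List.range n).map fun i => cmaj (rotLast^[i] π)).IsRotated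
        ((List.range n).map fun i => cmaj (rotLast^[i] σ)) := by
  rw [cycStat_cDes_eq_iff hn hπn hσn, map_cmaj_isRotated_iff hn hπn hσn]

/-- The cyclic statistics `cDes` and `ocmaj` are equivalent: for permutations `π`, `σ`
of the same length `n ≥ 1`, the multisets of cyclic descent sets of their rotations agree
iff the sequences `(cmaj π⁽¹⁾, …, cmaj π⁽ⁿ⁾)` and `(cmaj σ⁽¹⁾, …, cmaj σ⁽ⁿ⁾)` are cyclic
rotations of one another, where `π⁽¹⁾ = π` and `π⁽ⁱ⁺¹⁾` is obtained from `π⁽ⁱ⁾` by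
moving its last letter to the front. -/
theorem cDes_ocmaj_equivalent (n : ℕ) (hn : 1 ≤ n) (π σ : List ℕ)
    (hπ : IsPerm π) (hσ : IsPerm σ) (hπn : π.length = n) (hσn : σ.length = n) :
    cycStat cDes π = cycStat cDes σ ↔
      ((List.range n).map fun i => cmaj (rotLast^[i] π)).IsRotated
        ((List.range n).map fun i => cmaj (rotLast^[i] σ)) :=
  cDes_ocmaj_equivalent_general n hn π σ hπn hσn
end
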